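/- arXiv:2311.12184 — 9 statements merged into one kernel-verified Lean document; each statement's English description precedes it below -/
import Mathlib

section
/- Let X, Y, and A be Borel spaces that are separable metric spaces, let T be a stochastic kernel on X given X × A that is weakly continuous, and let Q be a stochastic kernel on Y given A × X that is continuous in total variation. Then the stochastic kernel P on X × Y given X × A defined by P(B × C | x,a) = ∫_B Q(C|a,x') T(dx'|x,a) is semi-uniform Feller; that is, for every bounded continuous f : X → ℝ and every (x,a) ∈ X × A, sup_{C ∈ B(Y)} |∫_X f(x') Q(C|a',x') T(dx'|x'',a') − ∫_X f(x') Q(C|a,x') T(dx'|x,a)| → 0 as (x'',a') → (x,a) in X × A. -/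
open MeasureTheory ProbabilityTheory Filter Topology BoundedContinuousFunction Set
open scoped ENNReal NNReal

noncomputable section

/-- The marginal measure `A ↦ μ(A × B)` on the first factor. -/
def sectionMeasure {X Y : Type*} [MeasurableSpace X] [MeasurableSpace Y]
    (μ : Measure (X × Y)) (B : Set Y) : Measure X :=
  (μ.restrict (Set.univ ×ˢ B)).map Prod.fst

/-- Semi-uniform Feller continuity of a stochastic kernel on `X × Y` given `Z`. -/
def SemiUniformFeller {X Y Z : Type*} [MeasurableSpace X] [TopologicalSpace X]
    [MeasurableSpace Y] [MeasurableSpace Z] [TopologicalSpace Z]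
    (P : Kernel Z (X × Y)) : Prop :=
  ∀ z : Z, ∀ f : X →ᵇ ℝ,
    Filter.Tendsto (fun z' => ⨆ (B : Set Y) (_ : MeasurableSet B),
      |(∫ x, f x ∂(sectionMeasure (P z') B)) - ∫ x, f x ∂(sectionMeasure (P z) B)|)
      (𝓝 z) (𝓝 0)

lemma sectionMeasure_integral {X Y : Type*} [MeasurableSpace X] [MeasurableSpace Y]
    (μ : Measure (X × Y)) (ν : Measure X) (q : X → ℝ≥0∞)
    (hq : Measurable q) (hq1 : ∀ x, q x ≠ ∞) (C : Set Y)
    (h : ∀ A : Set X, MeasurableSet A → μ (A ×ˢ C) = ∫⁻ x in A, q x ∂ν)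
    (f : X → ℝ) :
    ∫ x, f x ∂(sectionMeasure μ C) = ∫ x, (q x).toReal * f x ∂ν := by
  have hsec : sectionMeasure μ C = ν.withDensity q := by
    ext A hA
    rw [sectionMeasure, Measure.map_apply measurable_fst hA,
      Measure.restrict_apply (measurable_fst hA)]
    have hAC : (Prod.fst ⁻¹' A : Set (X × Y)) ∩ Set.univ ×ˢ C = A ×ˢ C := by
      ext p; simp [and_comm]
    rw [hAC, h A hA, withDensity_apply _ hA]
  have hd : ν.withDensity q = ν.withDensity (fun x => ((q x).toNNReal : ℝ≥0∞)) := by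
    congr 1; ext x; rw [ENNReal.coe_toNNReal (hq1 x)]
  rw [hsec, hd, integral_withDensity_eq_integral_smul hq.ennreal_toNNReal f]
  simp only [NNReal.smul_def, smul_eq_mul]
  rfl

/-- If the transition kernel `T` is weakly continuous and the observation kernel `Q` is
continuous in total variation, then the joint kernel
`P(B × C|x,a) = ∫_B Q(C|a,x') T(dx'|x,a)` is semi-uniform Feller. -/
theorem semiUniformFeller_of_weak_and_tv
    {X Y A : Type*}
    [MeasurableSpace X] [MetricSpace X] [BorelSpace X]
    [TopologicalSpace.SeparableSpace X] [StandardBorelSpace X]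
    [MeasurableSpace Y] [MetricSpace Y] [BorelSpace Y]
    [TopologicalSpace.SeparableSpace Y] [StandardBorelSpace Y]
    [MeasurableSpace A] [MetricSpace A] [BorelSpace A]
    [TopologicalSpace.SeparableSpace A] [StandardBorelSpace A]
    (T : Kernel (X × A) X) [IsMarkovKernel T]
    (Q : Kernel (A × X) Y) [IsMarkovKernel Q]
    (hT : ∀ f : X →ᵇ ℝ, Continuous fun p : X × A => ∫ x', f x' ∂(T p))
    (hQ : ∀ p : A × X, Filter.Tendsto
      (fun p' => ⨆ (C : Set Y) (_ : MeasurableSet C), |(Q p' C).toReal - (Q p C).toReal|)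
      (𝓝 p) (𝓝 0))
    (P : Kernel (X × A) (X × Y)) [IsMarkovKernel P]
    (hP : ∀ (x : X) (a : A) (B : Set X) (C : Set Y), MeasurableSet B → MeasurableSet C →
      P (x, a) (B ×ˢ C) = ∫⁻ x' in B, Q (a, x') C ∂(T (x, a))) :
    SemiUniformFeller P := by
  intro z f
  obtain ⟨x, a⟩ := z
  -- basic facts about `Q`
  have hQle : ∀ (p : A × X) (C : Set Y), |(Q p C).toReal| ≤ 1 := by
    intro p C
    rw [abs_of_nonneg ENNReal.toReal_nonneg]
    have := ENNReal.toReal_mono (a := Q p C) ENNReal.one_ne_top prob_le_one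
    simpa using this
  have hmeasQ : ∀ (b : A) (C : Set Y), MeasurableSet C →
      Measurable fun x' : X => (Q (b, x') C).toReal := fun b C hC =>
    ((Q.measurable_coe hC).comp measurable_prodMk_left).ennreal_toReal
  have hInt : ∀ (p : X × A) (b : A) (C : Set Y), MeasurableSet C →
      Integrable (fun x' => (Q (b, x') C).toReal * f x') (T p) := by
    intro p b C hC
    refine Integrable.mono' (integrable_const ‖f‖)
      ((hmeasQ b C hC).mul f.continuous.measurable).aestronglyMeasurable
      (Eventually.of_forall fun x' => ?_)
    rw [Real.norm_eq_abs, abs_mul]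
    calc |(Q (b, x') C).toReal| * |f x'| ≤ 1 * ‖f‖ := by
            refine mul_le_mul (hQle _ C) ?_ (abs_nonneg _) zero_le_one
            simpa [Real.norm_eq_abs] using f.norm_coe_le_norm x'
      _ = ‖f‖ := one_mul _
  have key : ∀ (z' : X × A) (C : Set Y), MeasurableSet C →
      ∫ x'', f x'' ∂(sectionMeasure (P z') C)
        = ∫ x', (Q (z'.2, x') C).toReal * f x' ∂(T z') := by
    intro z' C hC
    refine sectionMeasure_integral _ (T z') _
      ((Q.measurable_coe hC).comp measurable_prodMk_left)
      (fun x' => measure_ne_top _ _) C (fun A0 hA0 => ?_) f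
    have := hP z'.1 z'.2 A0 C hA0 hC
    rwa [Prod.mk.eta] at this
  set μ : Measure X := T (x, a) with hμdef
  rw [Metric.tendsto_nhds]
  intro ε hε
  set M : ℝ := ‖f‖ + 1 with hMdef
  have hM1 : (1:ℝ) ≤ M := le_add_of_nonneg_left (norm_nonneg f)
  have hM0 : (0:ℝ) < M := lt_of_lt_of_le one_pos hM1
  have hfM : ∀ x', |f x'| ≤ M := by
    intro x'
    have := f.norm_coe_le_norm x'
    rw [Real.norm_eq_abs] at this
    simp only [hMdef]; linarith
  set ε' : ℝ := ε / (2 * (6 * M + 2)) with hε'def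
  have hε'0 : 0 < ε' := div_pos hε (by nlinarith)
  -- choice of good radii around each point
  have hδex : ∀ d : X, ∃ δ : ℝ, 0 < δ ∧
      (∀ p' : A × X, dist p' (a, d) < δ → ∀ C : Set Y, MeasurableSet C →
        |(Q p' C).toReal - (Q (a, d) C).toReal| ≤ ε') ∧
      (∀ x' : X, dist x' d < δ → |f x' - f d| ≤ ε') := by
    intro d
    have h1 : ∀ᶠ p' in 𝓝 (a, d),
        (⨆ (C : Set Y) (_ : MeasurableSet C), |(Q p' C).toReal - (Q (a, d) C).toReal|) < ε' :=
      (hQ (a, d)).eventually_lt_const hε'0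
    rw [Metric.eventually_nhds_iff] at h1
    obtain ⟨δ1, hδ1, h1⟩ := h1
    obtain ⟨δ2, hδ2, h2⟩ := Metric.continuousAt_iff.mp (f.continuous.continuousAt (x := d)) ε' hε'0
    refine ⟨min δ1 δ2, lt_min hδ1 hδ2, fun p' hp' C hC => ?_, fun x' hx' => ?_⟩
    · have hsup := h1 (lt_of_lt_of_le hp' (min_le_left _ _))
      have hbdd : BddAbove (Set.range fun C : Set Y =>
          ⨆ (_ : MeasurableSet C), |(Q p' C).toReal - (Q (a, d) C).toReal|) := by
        refine ⟨2, forall_mem_range.2 fun C0 => Real.iSup_le (fun _ => ?_) (by norm_num)⟩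
        calc |(Q p' C0).toReal - (Q (a, d) C0).toReal|
            ≤ |(Q p' C0).toReal| + |(Q (a, d) C0).toReal| := abs_sub _ _
          _ ≤ 1 + 1 := add_le_add (hQle _ _) (hQle _ _)
          _ = 2 := by norm_num
      have hle : |(Q p' C).toReal - (Q (a, d) C).toReal|
          ≤ ⨆ (C : Set Y) (_ : MeasurableSet C), |(Q p' C).toReal - (Q (a, d) C).toReal| := by
        calc |(Q p' C).toReal - (Q (a, d) C).toReal|
            = ⨆ (_ : MeasurableSet C), |(Q p' C).toReal - (Q (a, d) C).toReal| :=
              (ciSup_pos (f := fun _ : MeasurableSet C =>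
                |(Q p' C).toReal - (Q (a, d) C).toReal|) hC).symm
          _ ≤ _ := le_ciSup hbdd C
      linarith [lt_of_le_of_lt hle hsup]
    · have := h2 (lt_of_lt_of_le hx' (min_le_right _ _))
      rw [Real.dist_eq] at this
      linarith
  choose δ hδ0 hδQ hδf using hδex
  have hrex : ∀ d : X, ∃ ρ : ℝ, ρ ∈ Set.Ioo 0 (δ d) ∧ μ (frontier (Metric.ball d ρ)) = 0 := by
    intro d
    obtain ⟨ρ, hρ, h0⟩ := exists_null_frontier_thickening μ {d} (hδ0 d)
    exact ⟨ρ, hρ, by rwa [Metric.thickening_singleton] at h0⟩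
  choose ρ hρmem hρnull using hrex
  -- countable subcover
  haveI : SecondCountableTopology X :=
    UniformSpace.secondCountable_of_separable X
  obtain ⟨Tset, hTc, hTu⟩ := TopologicalSpace.isOpen_iUnion_countable
    (fun d : X => Metric.ball d (ρ d)) (fun d => Metric.isOpen_ball)
  have hTu' : ⋃ d ∈ Tset, Metric.ball d (ρ d) = Set.univ := by
    rw [hTu]; ext p
    simp only [Set.mem_iUnion, Set.mem_univ, iff_true]
    exact ⟨p, Metric.mem_ball_self (hρmem p).1⟩
  have hTne : Tset.Nonempty := by
    rcases Set.eq_empty_or_nonempty Tset with h | h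
    · exfalso
      rw [h] at hTu'
      simp only [Set.mem_empty_iff_false, Set.iUnion_of_empty, Set.iUnion_empty] at hTu'
      exact (Set.eq_empty_iff_forall_notMem.mp hTu'.symm) x (Set.mem_univ x)
    · exact h
  obtain ⟨g, hg⟩ := Set.Countable.exists_eq_range hTc hTne
  set B : ℕ → Set X := fun n => Metric.ball (g n) (ρ (g n)) with hBdef
  have hBcover : ⋃ n, B n = Set.univ := by
    rw [← hTu', hg, Set.biUnion_range]
  set E : ℕ → Set X := disjointed B with hEdef
  have hBmeas : ∀ n, MeasurableSet (B n) := fun n => Metric.isOpen_ball.measurableSet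
  have hEmeas : ∀ n, MeasurableSet (E n) := MeasurableSet.disjointed hBmeas
  have hEsub : ∀ n, E n ⊆ B n := disjointed_subset B
  have hEdisj : Pairwise (Function.onFun Disjoint E) := disjoint_disjointed B
  set V : ℕ → Set X := fun k => ⋃ n ∈ Finset.range k, B n with hVdef
  have hVsucc : ∀ k, V (k + 1) = B k ∪ V k := by
    intro k
    show ⋃ n ∈ Finset.range (k + 1), B n = _
    rw [Finset.range_add_one, Finset.set_biUnion_insert]
  have hV0 : V 0 = ∅ := by simp [hVdef]
  have hpV : ∀ k, (partialSups B k : Set X) = V (k + 1) := by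
    intro k
    induction k with
    | zero => rw [partialSups_zero, hVsucc, hV0, Set.union_empty]
    | succ k ih =>
      rw [partialSups_add_one, ih, hVsucc (k + 1)]
      exact Set.union_comm _ _
  have hWV : ∀ k, ⋃ n ∈ Finset.range k, E n = V k := by
    intro k
    induction k with
    | zero => simp [hV0]
    | succ k ih =>
      rw [Finset.range_add_one, Finset.set_biUnion_insert, ih, hVsucc]
      cases k with
      | zero =>
        rw [hV0, Set.union_empty, Set.union_empty]
        show disjointed B 0 = B 0
        exact disjointed_zero B
      | succ m =>
        have hE : E (m + 1) = B (m + 1) \ V (m + 1) := by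
          show disjointed B (m + 1) = _
          rw [disjointed_add_one, hpV m]
        rw [hE, Set.diff_union_self]
  have hfrB : ∀ n, μ (frontier (B n)) = 0 := fun n => hρnull (g n)
  have hfrU : ∀ s t : Set X, frontier (s ∪ t) ⊆ frontier s ∪ frontier t := fun s t =>
    (frontier_union_subset s t).trans
      (Set.union_subset_union Set.inter_subset_left Set.inter_subset_right)
  have hfrI : ∀ s t : Set X, frontier (s ∩ t) ⊆ frontier s ∪ frontier t := fun s t =>
    (frontier_inter_subset s t).trans
      (Set.union_subset_union Set.inter_subset_left Set.inter_subset_right)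
  have hfrV : ∀ k, μ (frontier (V k)) = 0 := by
    intro k
    induction k with
    | zero => rw [hV0, frontier_empty]; exact measure_empty
    | succ k ih =>
      rw [hVsucc]
      exact measure_mono_null (hfrU _ _) (measure_union_null (hfrB k) ih)
  have hfrE : ∀ n, μ (frontier (E n)) = 0 := by
    intro n
    cases n with
    | zero =>
      have : E 0 = B 0 := disjointed_zero B
      rw [this]; exact hfrB 0
    | succ m =>
      have hE : E (m + 1) = B (m + 1) ∩ (V (m + 1))ᶜ := by
        show disjointed B (m + 1) = _
        rw [disjointed_add_one, hpV m, Set.diff_eq]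
      rw [hE]
      refine measure_mono_null (hfrI _ _)
        (measure_union_null (hfrB (m + 1)) ?_)
      rw [frontier_compl]
      exact hfrV (m + 1)
  -- weak convergence of T and portmanteau
  have hconv : ∀ E0 : Set X, μ (frontier E0) = 0 →
      Tendsto (fun z' : X × A => (T z' E0).toReal) (𝓝 (x, a)) (𝓝 ((μ E0).toReal)) := by
    intro E0 h0
    have hweak := (ProbabilityMeasure.tendsto_iff_forall_integral_tendsto
      (μs := fun z' : X × A => (⟨T z', inferInstance⟩ : ProbabilityMeasure X))
      (μ := ⟨μ, inferInstance⟩) (F := 𝓝 (x, a))).mpr (fun gf => (hT gf).tendsto (x, a))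
    have h1 := ProbabilityMeasure.tendsto_measure_of_null_frontier_of_tendsto' hweak h0
    exact (ENNReal.tendsto_toReal (measure_ne_top μ E0)).comp h1
  -- choice of N
  have hmono : Monotone V := fun k l hkl =>
    Set.biUnion_subset_biUnion_left (Finset.range_subset_range.mpr hkl)
  have hiU : ⋃ k, V k = Set.univ := by
    ext p
    simp only [Set.mem_iUnion, Set.mem_univ, iff_true]
    have hp : p ∈ ⋃ n, B n := by rw [hBcover]; trivial
    obtain ⟨n, hn⟩ := Set.mem_iUnion.mp hp
    exact ⟨n + 1, Set.mem_biUnion (Finset.self_mem_range_succ n) hn⟩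
  have htendV := tendsto_measure_iUnion_atTop (μ := μ) hmono
  rw [hiU] at htendV
  have h1R : Tendsto (fun k => (μ (V k)).toReal) atTop (𝓝 1) := by
    have h2 := (ENNReal.tendsto_toReal (by simp : μ Set.univ ≠ ∞)).comp htendV
    simpa [measure_univ, Function.comp_def] using h2
  obtain ⟨N, hN⟩ := (h1R.eventually_const_lt (by linarith : 1 - ε' < 1)).exists
  have hVmeas : MeasurableSet (V N) := Finset.measurableSet_biUnion _ (fun n _ => hBmeas n)
  have hUc : (μ (V N)ᶜ).toReal ≤ ε' := by
    have h1 : μ (V N)ᶜ = 1 - μ (V N) := by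
      rw [measure_compl hVmeas (measure_ne_top _ _), measure_univ]
    have h2 : (μ (V N)ᶜ).toReal = 1 - (μ (V N)).toReal := by
      rw [h1, ENNReal.toReal_sub_of_le prob_le_one ENNReal.one_ne_top, ENNReal.toReal_one]
    linarith
  -- eventual conditions
  have ev1 : ∀ᶠ z' in 𝓝 (x, a), ∀ n ∈ Finset.range N,
      |(T z' (E n)).toReal - (μ (E n)).toReal| < ε' / (N + 1) := by
    rw [eventually_all_finset]
    intro n _
    have hpos : (0:ℝ) < ε' / (N + 1) := by positivity
    have h4 := Metric.tendsto_nhds.mp (hconv (E n) (hfrE n)) _ hpos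
    simpa [Real.dist_eq] using h4
  have ev2 : ∀ᶠ z' in 𝓝 (x, a), (T z' (V N)ᶜ).toReal < 2 * ε' := by
    have h4 := Metric.tendsto_nhds.mp
      (hconv (V N)ᶜ (by rw [frontier_compl]; exact hfrV N)) ε' hε'0
    filter_upwards [h4] with z' hz'
    rw [Real.dist_eq] at hz'
    have := abs_lt.mp hz'
    linarith
  have ev3 : ∀ᶠ z' in 𝓝 (x, a), ∀ n ∈ Finset.range N, dist z'.2 a < δ (g n) := by
    rw [eventually_all_finset]
    intro n _
    have hsnd : Tendsto (fun z' : X × A => z'.2) (𝓝 (x, a)) (𝓝 a) :=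
      continuous_snd.tendsto (x, a)
    have := hsnd.eventually (Metric.ball_mem_nhds a (hδ0 (g n)))
    exact this.mono fun z' hz' => Metric.mem_ball.mp hz'
  filter_upwards [ev1, ev2, ev3] with z' h1 h2 h3
  -- the uniform bound over measurable C
  have hbound : ∀ C : Set Y, MeasurableSet C →
      |(∫ x'', f x'' ∂(sectionMeasure (P z') C))
        - ∫ x'', f x'' ∂(sectionMeasure (P (x, a)) C)| ≤ ε / 2 := by
    intro C hC
    rw [key z' C hC, key (x, a) C hC]
    set μ' : Measure X := T z' with hμ'def
    set g1 : X → ℝ := fun x' => (Q (z'.2, x') C).toReal * f x' with hg1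
    set g2 : X → ℝ := fun x' => (Q (a, x') C).toReal * f x' with hg2
    have hg1int : Integrable g1 μ' := hInt z' z'.2 C hC
    have hg2int : Integrable g2 μ := hInt (x, a) a C hC
    have hsplit : ∀ (ν : Measure X) (g0 : X → ℝ), Integrable g0 ν →
        ∫ x', g0 x' ∂ν
          = (∑ n ∈ Finset.range N, ∫ x' in E n, g0 x' ∂ν) + ∫ x' in (V N)ᶜ, g0 x' ∂ν := by
      intro ν g0 hg0
      rw [← integral_add_compl hVmeas hg0]
      congr 1
      rw [← hWV N, integral_biUnion_finset (Finset.range N) (fun n _ => hEmeas n)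
        (hEdisj.set_pairwise _) (fun n _ => hg0.integrableOn)]
    rw [hsplit μ' g1 hg1int, hsplit μ g2 hg2int]
    set c : ℕ → ℝ := fun n => f (g n) * (Q (a, g n) C).toReal with hcdef
    have hcle : ∀ n, |c n| ≤ M := by
      intro n
      rw [hcdef, abs_mul]
      calc |f (g n)| * |(Q (a, g n) C).toReal| ≤ M * 1 :=
            mul_le_mul (hfM _) (hQle _ _) (abs_nonneg _) hM0.le
        _ = M := mul_one M
    have hptw : ∀ n ∈ Finset.range N, ∀ x' ∈ E n,
        |g1 x' - c n| ≤ (1 + M) * ε' ∧ |g2 x' - c n| ≤ (1 + M) * ε' := by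
      intro n hn x' hx'
      have hxB : x' ∈ B n := hEsub n hx'
      have hdx : dist x' (g n) < δ (g n) := lt_trans (Metric.mem_ball.mp hxB) (hρmem (g n)).2
      have hQ1 : |(Q (z'.2, x') C).toReal - (Q (a, g n) C).toReal| ≤ ε' := by
        refine hδQ (g n) (z'.2, x') ?_ C hC
        rw [Prod.dist_eq]
        exact max_lt (h3 n hn) hdx
      have hQ2 : |(Q (a, x') C).toReal - (Q (a, g n) C).toReal| ≤ ε' := by
        refine hδQ (g n) (a, x') ?_ C hC
        rw [Prod.dist_eq]
        exact max_lt (by simpa using hδ0 (g n)) hdx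
      have hf1 : |f x' - f (g n)| ≤ ε' := hδf (g n) x' hdx
      constructor
      · have hsplit1 : g1 x' - c n = (Q (z'.2, x') C).toReal * (f x' - f (g n))
            + f (g n) * ((Q (z'.2, x') C).toReal - (Q (a, g n) C).toReal) := by
          simp only [hg1, hcdef]; ring
        rw [hsplit1]
        calc |(Q (z'.2, x') C).toReal * (f x' - f (g n))
              + f (g n) * ((Q (z'.2, x') C).toReal - (Q (a, g n) C).toReal)|
            ≤ |(Q (z'.2, x') C).toReal * (f x' - f (g n))|
              + |f (g n) * ((Q (z'.2, x') C).toReal - (Q (a, g n) C).toReal)| := abs_add_le _ _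
          _ ≤ 1 * ε' + M * ε' := by
              rw [abs_mul, abs_mul]
              exact add_le_add
                (mul_le_mul (hQle _ _) hf1 (abs_nonneg _) zero_le_one)
                (mul_le_mul (hfM _) hQ1 (abs_nonneg _) hM0.le)
          _ = (1 + M) * ε' := by ring
      · have hsplit2 : g2 x' - c n = (Q (a, x') C).toReal * (f x' - f (g n))
            + f (g n) * ((Q (a, x') C).toReal - (Q (a, g n) C).toReal) := by
          simp only [hg2, hcdef]; ring
        rw [hsplit2]
        calc |(Q (a, x') C).toReal * (f x' - f (g n))
              + f (g n) * ((Q (a, x') C).toReal - (Q (a, g n) C).toReal)|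
            ≤ |(Q (a, x') C).toReal * (f x' - f (g n))|
              + |f (g n) * ((Q (a, x') C).toReal - (Q (a, g n) C).toReal)| := abs_add_le _ _
          _ ≤ 1 * ε' + M * ε' := by
              rw [abs_mul, abs_mul]
              exact add_le_add
                (mul_le_mul (hQle _ _) hf1 (abs_nonneg _) zero_le_one)
                (mul_le_mul (hfM _) hQ2 (abs_nonneg _) hM0.le)
          _ = (1 + M) * ε' := by ring
    have hterm : ∀ n ∈ Finset.range N,
        |(∫ x' in E n, g1 x' ∂μ') - ∫ x' in E n, g2 x' ∂μ|
          ≤ (1 + M) * ε' * (μ' (E n)).toReal + M * (ε' / (N + 1))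
            + (1 + M) * ε' * (μ (E n)).toReal := by
      intro n hn
      have hμ'fin : μ' (E n) < ∞ := measure_lt_top _ _
      have hμfin : μ (E n) < ∞ := measure_lt_top _ _
      have hA1 : |(∫ x' in E n, g1 x' ∂μ') - c n * (μ' (E n)).toReal|
          ≤ (1 + M) * ε' * (μ' (E n)).toReal := by
        have heq : (∫ x' in E n, g1 x' ∂μ') - c n * (μ' (E n)).toReal
            = ∫ x' in E n, (g1 x' - c n) ∂μ' := by
          rw [integral_sub hg1int.integrableOn (integrableOn_const hμ'fin.ne),
            setIntegral_const, measureReal_def, smul_eq_mul, mul_comm]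
        rw [heq, ← Real.norm_eq_abs]
        exact norm_setIntegral_le_of_norm_le_const hμ'fin
          (fun x' hx' => by rw [Real.norm_eq_abs]; exact (hptw n hn x' hx').1)
      have hA2 : |c n * (μ (E n)).toReal - ∫ x' in E n, g2 x' ∂μ|
          ≤ (1 + M) * ε' * (μ (E n)).toReal := by
        have heq : c n * (μ (E n)).toReal - (∫ x' in E n, g2 x' ∂μ)
            = -(∫ x' in E n, (g2 x' - c n) ∂μ) := by
          rw [integral_sub hg2int.integrableOn (integrableOn_const hμfin.ne),
            setIntegral_const, measureReal_def, smul_eq_mul, mul_comm]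
          ring
        rw [heq, abs_neg, ← Real.norm_eq_abs]
        exact norm_setIntegral_le_of_norm_le_const hμfin
          (fun x' hx' => by rw [Real.norm_eq_abs]; exact (hptw n hn x' hx').2)
      have hA3 : |c n * (μ' (E n)).toReal - c n * (μ (E n)).toReal| ≤ M * (ε' / (N + 1)) := by
        rw [← mul_sub, abs_mul]
        exact mul_le_mul (hcle n) (h1 n hn).le (abs_nonneg _) hM0.le
      have hsplit3 : (∫ x' in E n, g1 x' ∂μ') - ∫ x' in E n, g2 x' ∂μ
          = ((∫ x' in E n, g1 x' ∂μ') - c n * (μ' (E n)).toReal)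
            + (c n * (μ' (E n)).toReal - c n * (μ (E n)).toReal)
            + (c n * (μ (E n)).toReal - ∫ x' in E n, g2 x' ∂μ) := by ring
      rw [hsplit3]
      refine le_trans (abs_add_three _ _ _) ?_
      exact add_le_add (add_le_add hA1 hA3) hA2
    -- sums of measures
    have hsum1 : ∑ n ∈ Finset.range N, (μ' (E n)).toReal ≤ 1 := by
      rw [← ENNReal.toReal_sum (fun n _ => measure_ne_top _ _)]
      have hle : ∑ n ∈ Finset.range N, μ' (E n) ≤ 1 := by
        rw [← measure_biUnion_finset (hEdisj.set_pairwise _) (fun n _ => hEmeas n)]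
        exact prob_le_one
      calc (∑ n ∈ Finset.range N, μ' (E n)).toReal ≤ (1 : ℝ≥0∞).toReal :=
            ENNReal.toReal_mono ENNReal.one_ne_top hle
        _ = 1 := ENNReal.toReal_one
    have hsum2 : ∑ n ∈ Finset.range N, (μ (E n)).toReal ≤ 1 := by
      rw [← ENNReal.toReal_sum (fun n _ => measure_ne_top _ _)]
      have hle : ∑ n ∈ Finset.range N, μ (E n) ≤ 1 := by
        rw [← measure_biUnion_finset (hEdisj.set_pairwise _) (fun n _ => hEmeas n)]
        exact prob_le_one
      calc (∑ n ∈ Finset.range N, μ (E n)).toReal ≤ (1 : ℝ≥0∞).toReal :=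
            ENNReal.toReal_mono ENNReal.one_ne_top hle
        _ = 1 := ENNReal.toReal_one
    -- tails
    have htail1 : |∫ x' in (V N)ᶜ, g1 x' ∂μ'| ≤ M * (2 * ε') := by
      have hb : |∫ x' in (V N)ᶜ, g1 x' ∂μ'| ≤ M * (μ' (V N)ᶜ).toReal := by
        rw [← Real.norm_eq_abs]
        refine norm_setIntegral_le_of_norm_le_const (measure_lt_top _ _)
          (fun x' _ => ?_)
        rw [Real.norm_eq_abs]
        calc |g1 x'| = |(Q (z'.2, x') C).toReal| * |f x'| := by rw [hg1]; exact abs_mul _ _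
          _ ≤ 1 * M := mul_le_mul (hQle _ _) (hfM _) (abs_nonneg _) zero_le_one
          _ = M := one_mul M
      have h2' : (μ' (V N)ᶜ).toReal ≤ 2 * ε' := h2.le
      calc |∫ x' in (V N)ᶜ, g1 x' ∂μ'| ≤ M * (μ' (V N)ᶜ).toReal := hb
        _ ≤ M * (2 * ε') := mul_le_mul_of_nonneg_left h2' hM0.le
    have htail2 : |∫ x' in (V N)ᶜ, g2 x' ∂μ| ≤ M * ε' := by
      have hb : |∫ x' in (V N)ᶜ, g2 x' ∂μ| ≤ M * (μ (V N)ᶜ).toReal := by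
        rw [← Real.norm_eq_abs]
        refine norm_setIntegral_le_of_norm_le_const (measure_lt_top _ _)
          (fun x' _ => ?_)
        rw [Real.norm_eq_abs]
        calc |g2 x'| = |(Q (a, x') C).toReal| * |f x'| := by rw [hg2]; exact abs_mul _ _
          _ ≤ 1 * M := mul_le_mul (hQle _ _) (hfM _) (abs_nonneg _) zero_le_one
          _ = M := one_mul M
      calc |∫ x' in (V N)ᶜ, g2 x' ∂μ| ≤ M * (μ (V N)ᶜ).toReal := hb
        _ ≤ M * ε' := mul_le_mul_of_nonneg_left hUc hM0.le
    -- assemble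
    have hsumdiff : |∑ n ∈ Finset.range N, ((∫ x' in E n, g1 x' ∂μ') - ∫ x' in E n, g2 x' ∂μ)|
        ≤ (1 + M) * ε' + M * ε' + (1 + M) * ε' := by
      have hstep := Finset.abs_sum_le_sum_abs
        (fun n => (∫ x' in E n, g1 x' ∂μ') - ∫ x' in E n, g2 x' ∂μ) (Finset.range N)
      have hstep2 : ∑ n ∈ Finset.range N, |(∫ x' in E n, g1 x' ∂μ') - ∫ x' in E n, g2 x' ∂μ|
          ≤ ∑ n ∈ Finset.range N, ((1 + M) * ε' * (μ' (E n)).toReal + M * (ε' / (N + 1))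
            + (1 + M) * ε' * (μ (E n)).toReal) :=
        Finset.sum_le_sum hterm
      have hstep3 : ∑ n ∈ Finset.range N, ((1 + M) * ε' * (μ' (E n)).toReal
            + M * (ε' / (N + 1)) + (1 + M) * ε' * (μ (E n)).toReal)
          = (1 + M) * ε' * (∑ n ∈ Finset.range N, (μ' (E n)).toReal)
            + N * (M * (ε' / (N + 1)))
            + (1 + M) * ε' * (∑ n ∈ Finset.range N, (μ (E n)).toReal) := by
        simp only [Finset.sum_add_distrib, ← Finset.mul_sum, Finset.sum_const,
          Finset.card_range, nsmul_eq_mul]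
        ring
      have hNd : (N : ℝ) * (M * (ε' / (N + 1))) ≤ M * ε' := by
        have hpos : (0:ℝ) < (N : ℝ) + 1 := by positivity
        rw [div_eq_mul_inv]
        have h5 : (N : ℝ) * (M * (ε' * ((N:ℝ) + 1)⁻¹)) = M * ε' * ((N:ℝ) * ((N:ℝ)+1)⁻¹) := by
          ring
        rw [h5]
        have h6 : (N : ℝ) * ((N:ℝ)+1)⁻¹ ≤ 1 := by
          rw [← div_eq_mul_inv, div_le_one hpos]; linarith
        calc M * ε' * ((N:ℝ) * ((N:ℝ)+1)⁻¹) ≤ M * ε' * 1 :=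
              mul_le_mul_of_nonneg_left h6 (mul_nonneg hM0.le hε'0.le)
          _ = M * ε' := mul_one _
      have h1M : (0:ℝ) ≤ (1 + M) * ε' := mul_nonneg (by linarith) hε'0.le
      have hmul1 : (1 + M) * ε' * (∑ n ∈ Finset.range N, (μ' (E n)).toReal) ≤ (1 + M) * ε' := by
        calc (1 + M) * ε' * (∑ n ∈ Finset.range N, (μ' (E n)).toReal) ≤ (1 + M) * ε' * 1 :=
              mul_le_mul_of_nonneg_left hsum1 h1M
          _ = (1 + M) * ε' := mul_one _
      have hmul2 : (1 + M) * ε' * (∑ n ∈ Finset.range N, (μ (E n)).toReal) ≤ (1 + M) * ε' := by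
        calc (1 + M) * ε' * (∑ n ∈ Finset.range N, (μ (E n)).toReal) ≤ (1 + M) * ε' * 1 :=
              mul_le_mul_of_nonneg_left hsum2 h1M
          _ = (1 + M) * ε' := mul_one _
      refine le_trans hstep (le_trans hstep2 ?_)
      rw [hstep3]
      exact add_le_add (add_le_add hmul1 hNd) hmul2
    have hfinal : |((∑ n ∈ Finset.range N, ∫ x' in E n, g1 x' ∂μ') + ∫ x' in (V N)ᶜ, g1 x' ∂μ')
        - ((∑ n ∈ Finset.range N, ∫ x' in E n, g2 x' ∂μ) + ∫ x' in (V N)ᶜ, g2 x' ∂μ)|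
        ≤ (6 * M + 2) * ε' := by
      have heq : ((∑ n ∈ Finset.range N, ∫ x' in E n, g1 x' ∂μ') + ∫ x' in (V N)ᶜ, g1 x' ∂μ')
          - ((∑ n ∈ Finset.range N, ∫ x' in E n, g2 x' ∂μ) + ∫ x' in (V N)ᶜ, g2 x' ∂μ)
          = (∑ n ∈ Finset.range N, ((∫ x' in E n, g1 x' ∂μ') - ∫ x' in E n, g2 x' ∂μ))
            + (∫ x' in (V N)ᶜ, g1 x' ∂μ') + (-(∫ x' in (V N)ᶜ, g2 x' ∂μ)) := by
        rw [Finset.sum_sub_distrib]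
        ring
      rw [heq]
      refine le_trans (abs_add_three _ _ _) ?_
      rw [abs_neg]
      have hfin2 := add_le_add (add_le_add hsumdiff htail1) htail2
      refine le_trans hfin2 ?_
      have : ((1 + M) * ε' + M * ε' + (1 + M) * ε') + M * (2 * ε') + M * ε'
          = (6 * M + 2) * ε' := by ring
      exact this.le
    have hεhalf : (6 * M + 2) * ε' = ε / 2 := by
      rw [hε'def]
      field_simp
    exact hfinal.trans hεhalf.le
  -- conclude
  have hS_nonneg : 0 ≤ ⨆ (C : Set Y) (_ : MeasurableSet C),
      |(∫ x'', f x'' ∂(sectionMeasure (P z') C))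
        - ∫ x'', f x'' ∂(sectionMeasure (P (x, a)) C)| :=
    Real.iSup_nonneg fun C => Real.iSup_nonneg fun _ => abs_nonneg _
  have hS_le : (⨆ (C : Set Y) (_ : MeasurableSet C),
      |(∫ x'', f x'' ∂(sectionMeasure (P z') C))
        - ∫ x'', f x'' ∂(sectionMeasure (P (x, a)) C)|) ≤ ε / 2 :=
    Real.iSup_le (fun C => Real.iSup_le (fun hC => hbound C hC) (by linarith)) (by linarith)
  rw [Real.dist_eq, sub_zero, abs_of_nonneg hS_nonneg]
  linarith

end
end

section
/- Let X, Y, and A be Borel spaces that are separable metric spaces, let T be a stochastic kernel on X given X × A that is continuous in total variation, and let Q be a stochastic kernel on Y given A × X that is continuous in a in total variation, i.e., for every x ∈ X and a ∈ A, sup_{C ∈ B(Y)} |Q(C|a',x) − Q(C|a,x)| → 0 as a' → a. Then the stochastic kernel P on X × Y given X × A defined by P(B × C | x,a) = ∫_B Q(C|a,x') T(dx'|x,a) is semi-uniform Feller. -/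
/-!
The `C`-section of `P(·|x,a)` has density `x' ↦ Q(C|a,x')` with respect to `T(·|x,a)`. Hence the
difference of the `f`-integrals of the sections at `(x',a')` and `(x,a)` splits into the integral
of `Q(C|a',·) f` against `T(·|x',a') - T(·|x,a)`, at most `2‖f‖` times the total variation
distance of `T(·|x',a')` and `T(·|x,a)`, plus the integral of `(Q(C|a',·) - Q(C|a,·)) f` against
`T(·|x,a)`, at most `‖f‖ ∫ ‖Q(·|a',x'') - Q(·|a,x'')‖_TV T(dx''|x,a)`. Both bounds are uniform in
`C`: the first tends to `0` by continuity of `T`, the second by dominated convergence.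
-/

open MeasureTheory ProbabilityTheory Filter Topology BoundedContinuousFunction Set

noncomputable section

open scoped ENNReal

section

variable {α : Type*} [MeasurableSpace α]

/-- `∫⁻` of `F i` equals that of a measurable minorant, to which dominated convergence applies. -/
lemma tendsto_lintegral_zero_of_le_const {ι : Type*} {l : Filter ι} [l.IsCountablyGenerated]
    {μ : Measure α} [IsFiniteMeasure μ] {F : ι → α → ℝ≥0∞} {c : ℝ≥0∞} (hc : c ≠ ∞)
    (hFc : ∀ i x, F i x ≤ c) (hF : ∀ x, Tendsto (fun i => F i x) l (𝓝 0)) :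
    Tendsto (fun i => ∫⁻ x, F i x ∂μ) l (𝓝 0) := by
  choose G hG_meas hGF hG_eq using fun i => exists_measurable_le_lintegral_eq μ (F i)
  rw [funext hG_eq, ← lintegral_zero]
  refine tendsto_lintegral_filter_of_dominated_convergence (fun _ => c)
    (.of_forall hG_meas) (.of_forall fun i => ae_of_all _ fun x => (hGF i x).trans (hFc i x))
    (by simpa using ENNReal.mul_ne_top hc (measure_ne_top μ univ)) (ae_of_all _ fun x => ?_)
  exact tendsto_of_tendsto_of_tendsto_of_le_of_le tendsto_const_nhds (hF x)
    (fun _ => zero_le) (fun i => hGF i x)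

lemma abs_integral_le_toReal_lintegral {μ : Measure α} {g d : α → ℝ} (hgd : ∀ x, |g x| ≤ d x)
    (hd : ∫⁻ x, ENNReal.ofReal (d x) ∂μ ≠ ∞) :
    |∫ x, g x ∂μ| ≤ (∫⁻ x, ENNReal.ofReal (d x) ∂μ).toReal :=
  (norm_integral_le_lintegral_norm g).trans <| ENNReal.toReal_mono hd <|
    lintegral_mono fun x => ENNReal.ofReal_le_ofReal (hgd x)

def tvDist (μ ν : Measure α) : ℝ :=
  ⨆ (B : Set α) (_ : MeasurableSet B), |(μ B).toReal - (ν B).toReal|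

lemma integral_eq_intervalIntegral_measureReal_lt (ρ : Measure α) [IsFiniteMeasure ρ]
    {g : α → ℝ} {M : ℝ} (hg : Measurable g) (hg0 : ∀ x, 0 ≤ g x) (hgM : ∀ x, g x ≤ M) (hM : 0 ≤ M) :
    ∫ x, g x ∂ρ = ∫ t in 0..M, ρ.real {x | t < g x} := by
  have hint : Integrable g ρ :=
    .of_bound hg.aestronglyMeasurable M (ae_of_all _ fun x => by
      rw [Real.norm_of_nonneg (hg0 x)]; exact hgM x)
  rw [hint.integral_eq_integral_meas_lt (ae_of_all _ hg0), intervalIntegral.integral_of_le hM,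
    setIntegral_eq_of_subset_of_forall_sdiff_eq_zero measurableSet_Ioi Ioc_subset_Ioi_self]
  rintro t ⟨ht0, htM⟩
  have hMt : M < t := lt_of_not_ge fun h => htM ⟨ht0, h⟩
  have : {x | t < g x} = ∅ := eq_empty_of_forall_notMem fun x hx => (hgM x).not_gt (hMt.trans hx)
  simp [this]

variable (μ ν : Measure α) [IsProbabilityMeasure μ] [IsProbabilityMeasure ν]

lemma abs_toReal_measure_sub_le_one (B : Set α) : |(μ B).toReal - (ν B).toReal| ≤ 1 :=
  abs_sub_le_of_nonneg_of_le ENNReal.toReal_nonneg measureReal_le_one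
    ENNReal.toReal_nonneg measureReal_le_one

lemma tvDist_le_one : tvDist μ ν ≤ 1 :=
  Real.iSup_le (fun B => Real.iSup_le (fun _ => abs_toReal_measure_sub_le_one μ ν B) zero_le_one)
    zero_le_one

lemma abs_toReal_measure_sub_le_tvDist {B : Set α} (hB : MeasurableSet B) :
    |(μ B).toReal - (ν B).toReal| ≤ tvDist μ ν := by
  refine le_ciSup_of_le ⟨1, ?_⟩ B (by rw [ciSup_pos hB])
  rintro _ ⟨C, rfl⟩
  exact Real.iSup_le (fun _ => abs_toReal_measure_sub_le_one μ ν C) zero_le_one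

lemma abs_integral_sub_integral_le_mul_tvDist {g : α → ℝ} {M : ℝ} (hg : Measurable g)
    (hg0 : ∀ x, 0 ≤ g x) (hgM : ∀ x, g x ≤ M) :
    |∫ x, g x ∂μ - ∫ x, g x ∂ν| ≤ M * tvDist μ ν := by
  have hM : 0 ≤ M := (hg0 _).trans (hgM (nonempty_of_isProbabilityMeasure μ).some)
  have hanti : ∀ ρ : Measure α, [IsFiniteMeasure ρ] → Antitone fun t => ρ.real {x | t < g x} :=
    fun ρ _ s t hst => measureReal_mono fun x hx => hst.trans_lt hx
  rw [integral_eq_intervalIntegral_measureReal_lt μ hg hg0 hgM hM,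
    integral_eq_intervalIntegral_measureReal_lt ν hg hg0 hgM hM,
    ← intervalIntegral.integral_sub (hanti μ).intervalIntegrable (hanti ν).intervalIntegrable,
    ← Real.norm_eq_abs]
  refine (intervalIntegral.norm_integral_le_of_norm_le_const fun t _ =>
    abs_toReal_measure_sub_le_tvDist μ ν (measurableSet_lt measurable_const hg)).trans_eq ?_
  rw [sub_zero, abs_of_nonneg hM, mul_comm]

lemma abs_integral_sub_integral_le_two_mul_tvDist {g : α → ℝ} {M : ℝ} (hg : Measurable g)
    (hgM : ∀ x, |g x| ≤ M) :
    |∫ x, g x ∂μ - ∫ x, g x ∂ν| ≤ 2 * M * tvDist μ ν := by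
  have hint : ∀ ρ : Measure α, [IsProbabilityMeasure ρ] → Integrable g ρ := fun ρ _ =>
    .of_bound hg.aestronglyMeasurable M (ae_of_all _ hgM)
  have hshift : ∀ ρ : Measure α, [IsProbabilityMeasure ρ] →
      ∫ x, (g x + M) ∂ρ = ∫ x, g x ∂ρ + M := fun ρ _ => by
    rw [integral_add (hint ρ) (integrable_const M), integral_const, probReal_univ, one_smul]
  have := abs_integral_sub_integral_le_mul_tvDist μ ν (M := 2 * M) (hg.add_const M)
    (fun x => by linarith [neg_abs_le (g x), hgM x])
    (fun x => by linarith [le_abs_self (g x), hgM x])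
  rwa [hshift μ, hshift ν, add_sub_add_right_eq_sub] at this

end

lemma sectionMeasure_eq_withDensity {X Y : Type*} [MeasurableSpace X] [MeasurableSpace Y]
    {μ : Measure (X × Y)} {ν : Measure X} {C : Set Y} {q : X → ℝ≥0∞}
    (h : ∀ B, MeasurableSet B → μ (B ×ˢ C) = ∫⁻ x in B, q x ∂ν) :
    sectionMeasure μ C = ν.withDensity q := by
  ext B hB
  rw [sectionMeasure, Measure.map_apply measurable_fst hB,
    Measure.restrict_apply (measurable_fst hB), withDensity_apply _ hB, ← h B hB]
  congr 1
  ext ⟨x, y⟩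
  simp

lemma integral_sectionMeasure {X Y : Type*} [MeasurableSpace X] [MeasurableSpace Y]
    {μ : Measure (X × Y)} {ν : Measure X} {C : Set Y} {q : X → ℝ≥0∞} (hq : Measurable q)
    (hq_top : ∀ x, q x < ∞) (h : ∀ B, MeasurableSet B → μ (B ×ˢ C) = ∫⁻ x in B, q x ∂ν)
    (g : X → ℝ) :
    ∫ x, g x ∂sectionMeasure μ C = ∫ x, (q x).toReal * g x ∂ν := by
  rw [sectionMeasure_eq_withDensity h,
    integral_withDensity_eq_integral_toReal_smul hq (ae_of_all _ hq_top)]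
  rfl

lemma abs_integral_mul_sub_integral_mul_le {α : Type*} [MeasurableSpace α] [TopologicalSpace α]
    [OpensMeasurableSpace α] (μ μ' : Measure α) [IsProbabilityMeasure μ] [IsProbabilityMeasure μ']
    {r r' d : α → ℝ} (hr : Measurable r) (hr' : Measurable r') (hr1 : ∀ x, |r x| ≤ 1)
    (hr'1 : ∀ x, |r' x| ≤ 1) (hd : ∀ x, |r' x - r x| ≤ d x) (hd1 : ∀ x, d x ≤ 1) (f : α →ᵇ ℝ) :
    |∫ x, r' x * f x ∂μ' - ∫ x, r x * f x ∂μ| ≤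
      2 * ‖f‖ * tvDist μ' μ + ‖f‖ * (∫⁻ x, ENNReal.ofReal (d x) ∂μ).toReal := by
  have hbound : ∀ {s : α → ℝ}, (∀ x, |s x| ≤ 1) → ∀ x, |s x * f x| ≤ ‖f‖ := fun hs x => by
    rw [abs_mul]
    exact (mul_le_of_le_one_left (abs_nonneg _) (hs x)).trans (f.norm_coe_le_norm x)
  have hint : ∀ {s : α → ℝ}, Measurable s → (∀ x, |s x| ≤ 1) →
      Integrable (fun x => s x * f x) μ := fun hs hs1 =>
    .of_bound (hs.mul f.continuous.measurable).aestronglyMeasurable ‖f‖ (ae_of_all _ (hbound hs1))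
  have hchange : |∫ x, r' x * f x ∂μ' - ∫ x, r' x * f x ∂μ| ≤ 2 * ‖f‖ * tvDist μ' μ :=
    abs_integral_sub_integral_le_two_mul_tvDist μ' μ (hr'.mul f.continuous.measurable)
      (hbound hr'1)
  have hdensity : |∫ x, r' x * f x ∂μ - ∫ x, r x * f x ∂μ| ≤
      ‖f‖ * (∫⁻ x, ENNReal.ofReal (d x) ∂μ).toReal := by
    have hd_fin : ∫⁻ x, ENNReal.ofReal (d x) ∂μ ≠ ∞ :=
      ((lintegral_mono fun x => ENNReal.ofReal_le_one.2 (hd1 x)).trans_lt (by simp)).ne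
    have hofReal : ∫⁻ x, ENNReal.ofReal (‖f‖ * d x) ∂μ =
        ENNReal.ofReal ‖f‖ * ∫⁻ x, ENNReal.ofReal (d x) ∂μ := by
      simp_rw [ENNReal.ofReal_mul (norm_nonneg f)]
      exact lintegral_const_mul' _ _ ENNReal.ofReal_ne_top
    rw [← integral_sub (hint hr' hr'1) (hint hr hr1)]
    refine (abs_integral_le_toReal_lintegral (d := fun x => ‖f‖ * d x) (fun x => ?_)
      (hofReal ▸ ENNReal.mul_ne_top ENNReal.ofReal_ne_top hd_fin)).trans_eq ?_
    · rw [← sub_mul, abs_mul, mul_comm]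
      exact mul_le_mul (f.norm_coe_le_norm x) (hd x) (abs_nonneg _) (norm_nonneg f)
    · rw [hofReal, ENNReal.toReal_mul, ENNReal.toReal_ofReal (norm_nonneg f)]
  exact (abs_sub_le _ _ _).trans (add_le_add hchange hdensity)

lemma tendsto_lintegral_tvDist_zero {X Y ι : Type*} [MeasurableSpace X] [MeasurableSpace Y]
    {l : Filter ι} [l.IsCountablyGenerated] (μ : Measure X) [IsFiniteMeasure μ]
    (κ : ι → X → Measure Y) (κ₀ : X → Measure Y) [∀ i x, IsProbabilityMeasure (κ i x)]
    [∀ x, IsProbabilityMeasure (κ₀ x)] (h : ∀ x, Tendsto (fun i => tvDist (κ i x) (κ₀ x)) l (𝓝 0)) :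
    Tendsto (fun i => (∫⁻ x, ENNReal.ofReal (tvDist (κ i x) (κ₀ x)) ∂μ).toReal) l (𝓝 0) :=
  (ENNReal.tendsto_toReal ENNReal.zero_ne_top).comp <|
    tendsto_lintegral_zero_of_le_const ENNReal.one_ne_top
      (fun _ _ => ENNReal.ofReal_le_one.2 (tvDist_le_one _ _))
      fun x => ENNReal.ofReal_zero ▸ ENNReal.tendsto_ofReal (h x)

lemma abs_integral_sectionMeasure_sub_le {X Y A : Type*} [MeasurableSpace X] [TopologicalSpace X]
    [OpensMeasurableSpace X] [MeasurableSpace Y] [MeasurableSpace A]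
    (T : Kernel (X × A) X) [IsMarkovKernel T] (Q : Kernel (A × X) Y) [IsMarkovKernel Q]
    (P : Kernel (X × A) (X × Y))
    (hP : ∀ (x : X) (a : A) (B : Set X) (C : Set Y), MeasurableSet B → MeasurableSet C →
      P (x, a) (B ×ˢ C) = ∫⁻ x' in B, Q (a, x') C ∂(T (x, a)))
    (f : X →ᵇ ℝ) (p p₀ : X × A) {C : Set Y} (hC : MeasurableSet C) :
    |∫ u, f u ∂sectionMeasure (P p) C - ∫ u, f u ∂sectionMeasure (P p₀) C| ≤
      2 * ‖f‖ * tvDist (T p) (T p₀) +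
        ‖f‖ * (∫⁻ u, ENNReal.ofReal (tvDist (Q (p.2, u)) (Q (p₀.2, u))) ∂T p₀).toReal := by
  have hQm : ∀ a, Measurable fun u => Q (a, u) C :=
    fun a => (Q.measurable_coe hC).comp measurable_prodMk_left
  have hQ1 : ∀ a u, |(Q (a, u) C).toReal| ≤ 1 := fun a u => by
    rw [abs_of_nonneg ENNReal.toReal_nonneg]
    exact measureReal_le_one
  obtain ⟨x, a⟩ := p
  obtain ⟨x₀, a₀⟩ := p₀
  rw [integral_sectionMeasure (hQm a) (fun _ => measure_lt_top _ _)
      (fun B hB => hP x a B C hB hC),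
    integral_sectionMeasure (hQm a₀) (fun _ => measure_lt_top _ _)
      (fun B hB => hP x₀ a₀ B C hB hC)]
  exact abs_integral_mul_sub_integral_mul_le _ _ (hQm a₀).ennreal_toReal (hQm a).ennreal_toReal
    (hQ1 a₀) (hQ1 a) (fun u => abs_toReal_measure_sub_le_tvDist _ _ hC)
    (fun u => tvDist_le_one _ _) f

theorem semiUniformFeller_of_tv_and_tv_in_a_general
    {X Y A : Type*}
    [MeasurableSpace X] [MetricSpace X] [BorelSpace X]
    [MeasurableSpace Y]
    [MeasurableSpace A] [MetricSpace A]
    (T : Kernel (X × A) X) [IsMarkovKernel T]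
    (Q : Kernel (A × X) Y) [IsMarkovKernel Q]
    (hT : ∀ p : X × A, Filter.Tendsto
      (fun p' => ⨆ (B : Set X) (_ : MeasurableSet B), |(T p' B).toReal - (T p B).toReal|)
      (𝓝 p) (𝓝 0))
    (hQ : ∀ (x : X) (a : A), Filter.Tendsto
      (fun a' => ⨆ (C : Set Y) (_ : MeasurableSet C),
        |(Q (a', x) C).toReal - (Q (a, x) C).toReal|)
      (𝓝 a) (𝓝 0))
    (P : Kernel (X × A) (X × Y))
    (hP : ∀ (x : X) (a : A) (B : Set X) (C : Set Y), MeasurableSet B → MeasurableSet C →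
      P (x, a) (B ×ˢ C) = ∫⁻ x' in B, Q (a, x') C ∂(T (x, a))) :
    SemiUniformFeller P := by
  intro p₀ f
  have hbound := abs_integral_sectionMeasure_sub_le T Q P hP f
  have hT_tendsto : Tendsto (fun p => tvDist (T p) (T p₀)) (𝓝 p₀) (𝓝 0) := hT p₀
  have hQ_tendsto := tendsto_lintegral_tvDist_zero (T p₀) (fun a u => Q (a, u))
    (fun u => Q (p₀.2, u)) fun u => hQ u p₀.2
  refine squeeze_zero (fun p => Real.iSup_nonneg fun _ => Real.iSup_nonneg fun _ => abs_nonneg _)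
    (fun p => have hb := (abs_nonneg _).trans (hbound p p₀ .empty)
      Real.iSup_le (fun C => Real.iSup_le (hbound p p₀) hb) hb) ?_
  simpa only [mul_zero, add_zero, Function.comp_def] using (hT_tendsto.const_mul (2 * ‖f‖)).add
    ((hQ_tendsto.comp (continuous_snd.tendsto p₀)).const_mul ‖f‖)

/-- If the transition kernel `T` is continuous in total variation and the observation kernel
`Q` is continuous in `a` in total variation, then the joint kernel
`P(B × C|x,a) = ∫_B Q(C|a,x') T(dx'|x,a)` is semi-uniform Feller. -/
theorem semiUniformFeller_of_tv_and_tv_in_a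
    {X Y A : Type*}
    [MeasurableSpace X] [MetricSpace X] [BorelSpace X]
    [TopologicalSpace.SeparableSpace X] [StandardBorelSpace X]
    [MeasurableSpace Y] [MetricSpace Y] [BorelSpace Y]
    [TopologicalSpace.SeparableSpace Y] [StandardBorelSpace Y]
    [MeasurableSpace A] [MetricSpace A] [BorelSpace A]
    [TopologicalSpace.SeparableSpace A] [StandardBorelSpace A]
    (T : Kernel (X × A) X) [IsMarkovKernel T]
    (Q : Kernel (A × X) Y) [IsMarkovKernel Q]
    (hT : ∀ p : X × A, Filter.Tendsto
      (fun p' => ⨆ (B : Set X) (_ : MeasurableSet B), |(T p' B).toReal - (T p B).toReal|)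
      (𝓝 p) (𝓝 0))
    (hQ : ∀ (x : X) (a : A), Filter.Tendsto
      (fun a' => ⨆ (C : Set Y) (_ : MeasurableSet C),
        |(Q (a', x) C).toReal - (Q (a, x) C).toReal|)
      (𝓝 a) (𝓝 0))
    (P : Kernel (X × A) (X × Y)) [IsMarkovKernel P]
    (hP : ∀ (x : X) (a : A) (B : Set X) (C : Set Y), MeasurableSet B → MeasurableSet C →
      P (x, a) (B ×ˢ C) = ∫⁻ x' in B, Q (a, x') C ∂(T (x, a))) :
    SemiUniformFeller P :=
  semiUniformFeller_of_tv_and_tv_in_a_general T Q hT hQ P hP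

end
end

section
/- (Aumann's lemma) Let S₁ and S₂ be Borel spaces and let κ be a stochastic kernel on S₁ given S₂. Then there exists a Borel measurable function φ : S₂ × [0,1] → S₁ such that for every Borel set B ⊂ S₁ and every s₂ ∈ S₂, κ(B|s₂) = λ({ω ∈ [0,1] : φ(s₂,ω) ∈ B}), where λ is Lebesgue measure on [0,1]. -/
open MeasureTheory ProbabilityTheory Set

lemma unitInterval.map_projIcc_volume_restrict_Icc :
    (volume.restrict (Icc (0 : ℝ) 1)).map (projIcc 0 1 zero_le_one) =
      (volume : Measure unitInterval) := by
  rw [← unitInterval.measurePreserving_coe.map_eq,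
    Measure.map_map continuous_projIcc.measurable measurable_subtype_coe]
  convert Measure.map_id
  exact funext (projIcc_val zero_le_one)

theorem aumann_lemma_general {S₁ S₂ : Type*}
    [MeasurableSpace S₁] [StandardBorelSpace S₁]
    [MeasurableSpace S₂]
    (κ : Kernel S₂ S₁) [IsMarkovKernel κ] :
    ∃ φ : S₂ → ℝ → S₁,
      Measurable (fun p : S₂ × ℝ => φ p.1 p.2) ∧
      ∀ (B : Set S₁), MeasurableSet B → ∀ s₂ : S₂,
        κ s₂ B = volume {ω : ℝ | ω ∈ Set.Icc (0 : ℝ) 1 ∧ φ s₂ ω ∈ B} := by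
  rcases isEmpty_or_nonempty S₂ with _ | ⟨⟨s₀⟩⟩
  · exact ⟨isEmptyElim, measurable_of_empty _, fun _ _ s => isEmptyElim s⟩
  have : Nonempty S₁ := nonempty_of_isProbabilityMeasure (κ s₀)
  obtain ⟨f, hf, hfκ⟩ := κ.exists_measurable_map_eq_unitInterval
  have hπ : Measurable (projIcc (0 : ℝ) 1 zero_le_one) := continuous_projIcc.measurable
  have hφ : Measurable fun p : S₂ × ℝ => f p.1 (projIcc 0 1 zero_le_one p.2) :=
    hf.comp (measurable_fst.prodMk (hπ.comp measurable_snd))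
  refine ⟨fun s ω => f s (projIcc 0 1 zero_le_one ω), hφ, fun B hB s => ?_⟩
  rw [← hfκ, ← unitInterval.map_projIcc_volume_restrict_Icc,
    Measure.map_map hf.of_uncurry_left hπ, Measure.map_apply (hf.of_uncurry_left.comp hπ) hB,
    Measure.restrict_apply' measurableSet_Icc, inter_comm]
  rfl

/-- **Aumann's lemma.** For any stochastic kernel `κ` on a Borel space `S₁` given a Borel
space `S₂` there is a Borel measurable function `φ : S₂ × [0,1] → S₁` such that
`κ(B|s₂) = λ({ω ∈ [0,1] : φ(s₂,ω) ∈ B})`, where `λ` is Lebesgue measure. -/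
theorem aumann_lemma {S₁ S₂ : Type*}
    [MeasurableSpace S₁] [StandardBorelSpace S₁]
    [MeasurableSpace S₂] [StandardBorelSpace S₂]
    (κ : Kernel S₂ S₁) [IsMarkovKernel κ] :
    ∃ φ : S₂ → ℝ → S₁,
      Measurable (fun p : S₂ × ℝ => φ p.1 p.2) ∧
      ∀ (B : Set S₁), MeasurableSet B → ∀ s₂ : S₂,
        κ s₂ B = volume {ω : ℝ | ω ∈ Set.Icc (0 : ℝ) 1 ∧ φ s₂ ω ∈ B} :=
  aumann_lemma_general κ
end

section
/- Let S₁ and S₂ be Borel spaces and let κ be a stochastic kernel on S₁ given S₂. Then for every natural number n ≥ 1 there exists a Borel measurable function φ : S₂ × [0,1]^n → S₁ such that for every Borel set B ⊂ S₁ and every s₂ ∈ S₂, κ(B|s₂) = λⁿ({ω ∈ [0,1]^n : φ(s₂,ω) ∈ B}), where λⁿ is n-dimensional Lebesgue measure on [0,1]^n. -/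
/-!
Mathlib represents a Markov kernel into a standard Borel space as the image of Lebesgue measure
on `[0,1]` under a jointly measurable map (`Kernel.exists_measurable_map_eq_unitInterval`). Under
Lebesgue measure on the cube `[0,1]ⁿ` a single coordinate is uniform on `[0,1]`, so composing that
map with the first coordinate gives the representation on the cube.
-/

open MeasureTheory ProbabilityTheory Filter Topology Set

theorem measurePreserving_projIcc_zero_one :
    MeasurePreserving (projIcc (0 : ℝ) 1 zero_le_one) (volume.restrict (Icc 0 1)) volume := by
  refine ⟨continuous_projIcc.measurable, ?_⟩
  rw [← unitInterval.measurePreserving_coe.map_eq,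
    Measure.map_map continuous_projIcc.measurable measurable_subtype_coe]
  simp [Function.comp_def, projIcc_val]

theorem measurePreserving_projIcc_eval {ι : Type*} [Fintype ι] (i : ι) :
    MeasurePreserving (fun ω : ι → ℝ => projIcc 0 1 zero_le_one (ω i))
      (volume.restrict (univ.pi fun _ => Icc 0 1)) volume := by
  have : IsProbabilityMeasure (volume.restrict (Icc (0 : ℝ) 1)) := ⟨by simp⟩
  rw [volume_pi, Measure.restrict_pi_pi]
  exact measurePreserving_projIcc_zero_one.comp (measurePreserving_eval _ i)

theorem aumann_lemma_multidim_general {S₁ S₂ : Type*}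
    [MeasurableSpace S₁] [StandardBorelSpace S₁]
    [MeasurableSpace S₂]
    (κ : Kernel S₂ S₁) [IsMarkovKernel κ] :
    ∀ n : ℕ, 1 ≤ n →
      ∃ φ : S₂ → (Fin n → ℝ) → S₁,
        Measurable (fun p : S₂ × (Fin n → ℝ) => φ p.1 p.2) ∧
        ∀ (B : Set S₁), MeasurableSet B → ∀ s₂ : S₂,
          κ s₂ B = volume {ω : Fin n → ℝ | (∀ i, ω i ∈ Set.Icc (0 : ℝ) 1) ∧ φ s₂ ω ∈ B} := by
  intro n hn
  rcases isEmpty_or_nonempty S₂ with hS₂ | ⟨⟨s₂⟩⟩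
  · exact ⟨isEmptyElim, measurable_of_empty _, fun _ _ s₂ => isEmptyElim s₂⟩
  have : Nonempty S₁ := nonempty_of_isProbabilityMeasure (κ s₂)
  obtain ⟨f, hf, hfκ⟩ := κ.exists_measurable_map_eq_unitInterval
  set u := fun ω : Fin n → ℝ => projIcc 0 1 zero_le_one (ω ⟨0, hn⟩)
  have hu := measurePreserving_projIcc_eval (⟨0, hn⟩ : Fin n)
  refine ⟨fun s ω => f s (u ω), hf.comp (measurable_fst.prodMk (hu.measurable.comp measurable_snd)),
    fun B hB s => ?_⟩
  have hfB : MeasurableSet (f s ⁻¹' B) := hf.of_uncurry_left hB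
  have hset : {ω | (∀ i, ω i ∈ Icc (0 : ℝ) 1) ∧ f s (u ω) ∈ B}
      = u ⁻¹' (f s ⁻¹' B) ∩ univ.pi fun _ => Icc 0 1 := by
    ext ω
    simp only [mem_ofPred_eq, mem_inter_iff, mem_preimage, mem_univ_pi, and_comm]
  rw [hset, ← Measure.restrict_apply (hu.measurable hfB), hu.measure_preimage hfB.nullMeasurableSet,
    ← Measure.map_apply hf.of_uncurry_left hB, hfκ]

/-- Multidimensional version of Aumann's lemma: for every `n ≥ 1` a stochastic kernel `κ`
on a Borel space `S₁` given a Borel space `S₂` admits a Borel measurable representation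
`φ : S₂ × [0,1]ⁿ → S₁` with `κ(B|s₂) = λⁿ({ω ∈ [0,1]ⁿ : φ(s₂,ω) ∈ B})`. -/
theorem aumann_lemma_multidim {S₁ S₂ : Type*}
    [MeasurableSpace S₁] [StandardBorelSpace S₁]
    [MeasurableSpace S₂] [StandardBorelSpace S₂]
    (κ : Kernel S₂ S₁) [IsMarkovKernel κ] :
    ∀ n : ℕ, 1 ≤ n →
      ∃ φ : S₂ → (Fin n → ℝ) → S₁,
        Measurable (fun p : S₂ × (Fin n → ℝ) => φ p.1 p.2) ∧
        ∀ (B : Set S₁), MeasurableSet B → ∀ s₂ : S₂,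
          κ s₂ B = volume {ω : Fin n → ℝ | (∀ i, ω i ∈ Set.Icc (0 : ℝ) 1) ∧ φ s₂ ω ∈ B} :=
  aumann_lemma_multidim_general κ
end

section
/- Let S₂ be a metric space, let Ω ⊂ ℝⁿ be a nonempty open set, and let φ : S₂ × ℝⁿ → ℝⁿ satisfy the Diffeomorphic Condition with respect to Ω. Then for every nonempty compact set K ⊂ Ω and every s₂ ∈ S₂, the images φ(s₂', K) := {φ(s₂',ω) : ω ∈ K} converge to φ(s₂, K) as s₂' → s₂ both in the Hausdorff metric and in the Fréchet–Nikodym sense; that is, d_H(φ(s₂', K), φ(s₂, K)) → 0 and λⁿ(φ(s₂', K) △ φ(s₂, K)) → 0 as s₂' → s₂, where d_H is the Hausdorff distance between nonempty compact subsets of ℝⁿ, λⁿ is Lebesgue measure on ℝⁿ, and △ denotes symmetric difference. -/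
open MeasureTheory Filter Topology Set

noncomputable section

/-- The Diffeomorphic Condition for `φ : S₂ × ℝⁿ → ℝⁿ` with respect to a nonempty open set
`Ω ⊂ ℝⁿ`. -/
structure DiffeoCondition {S₂ : Type*} [TopologicalSpace S₂] {n : ℕ}
    (φ : S₂ → (Fin n → ℝ) → (Fin n → ℝ)) (Ω : Set (Fin n → ℝ)) : Prop where
  cont : ContinuousOn (fun p : S₂ × (Fin n → ℝ) => φ p.1 p.2) (Set.univ ×ˢ Ω)
  diff : ∀ s₂, ∀ ω ∈ Ω, DifferentiableAt ℝ (φ s₂) ω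
  nonsing : ∀ s₂, ∀ ω ∈ Ω, Function.Bijective ⇑(fderiv ℝ (φ s₂) ω)
  jacCont : ContinuousOn (fun p : S₂ × (Fin n → ℝ) => fderiv ℝ (φ p.1) p.2) (Set.univ ×ˢ Ω)
  inj : ∀ s₂, Set.InjOn (φ s₂) Ω

/-! The maps `φ s'` converge to `φ s` uniformly on `K` by joint continuity and compactness. This
gives the Hausdorff convergence, and puts `φ s' '' K` inside ever thinner closed thickenings of
`A = φ s '' K`, so that `λ (φ s' '' K \ A) → 0`. By the change of variables formula, `λ (φ s' '' K)`
is the integral over `K` of `|det D φ s'|`, which converges uniformly to `|det D φ s|`, hence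
`λ (φ s' '' K) → λ A`. Since `λ (A \ B) + λ B ≤ λ A + λ (B \ A)`, these two limits force
`λ (A \ φ s' '' K) → 0` as well. -/

open scoped ENNReal

theorem IsCompact.tendstoUniformlyOn_of_continuousOn_prod {X Y Z : Type*} [TopologicalSpace X]
    [TopologicalSpace Y] [UniformSpace Z] {F : X → Y → Z} {K : Set Y} (hK : IsCompact K)
    (hF : ContinuousOn (Function.uncurry F) (univ ×ˢ K)) (x : X) :
    TendstoUniformlyOn F (F x) (𝓝 x) K := fun u hu => by
  obtain ⟨v, hv, hvu⟩ := hK.mem_uniformity_of_prod hF (mem_univ x) (symm_le_uniformity hu)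
  rw [nhdsWithin_univ] at hv
  exact mem_of_superset hv fun x' hx' y hy => hvu x' hx' y hy

section UniformImage

variable {ι α β : Type*} [PseudoMetricSpace β] {l : Filter ι} {F : ι → α → β} {f : α → β}
  {s : Set α}

theorem TendstoUniformlyOn.tendsto_hausdorffDist_image (h : TendstoUniformlyOn F f l s) :
    Tendsto (fun i => Metric.hausdorffDist (F i '' s) (f '' s)) l (𝓝 0) := by
  rw [Metric.tendsto_nhds]
  intro ε hε
  filter_upwards [Metric.tendstoUniformlyOn_iff.mp h (ε / 2) (half_pos hε)] with i hi
  have hle : Metric.hausdorffDist (F i '' s) (f '' s) ≤ ε / 2 := by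
    refine Metric.hausdorffDist_le_of_mem_dist (half_pos hε).le ?_ ?_
    · rintro _ ⟨x, hx, rfl⟩
      exact ⟨f x, mem_image_of_mem f hx, (dist_comm (F i x) (f x) ▸ hi x hx).le⟩
    · rintro _ ⟨x, hx, rfl⟩
      exact ⟨F i x, mem_image_of_mem (F i) hx, (hi x hx).le⟩
  rw [Real.dist_0_eq_abs, abs_of_nonneg Metric.hausdorffDist_nonneg]
  linarith

theorem TendstoUniformlyOn.eventually_image_subset_cthickening (h : TendstoUniformlyOn F f l s)
    {r : ℝ} (hr : 0 < r) : ∀ᶠ i in l, F i '' s ⊆ Metric.cthickening r (f '' s) := by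
  filter_upwards [Metric.tendstoUniformlyOn_iff.mp h r hr] with i hi
  rintro _ ⟨x, hx, rfl⟩
  exact Metric.mem_cthickening_of_dist_le _ _ _ _ (mem_image_of_mem f hx)
    (dist_comm (F i x) (f x) ▸ hi x hx).le

end UniformImage

theorem TendstoUniformlyOn.tendsto_setLIntegral_ofReal {ι α : Type*} [MeasurableSpace α]
    {μ : Measure α} {l : Filter ι} [l.IsCountablyGenerated] {F : ι → α → ℝ} {f : α → ℝ}
    {s : Set α} (hs : MeasurableSet s) (hμs : μ s ≠ ∞)
    (hF : ∀ᶠ i in l, AEMeasurable (F i) (μ.restrict s)) (hf : BddAbove (f '' s))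
    (h : TendstoUniformlyOn F f l s) :
    Tendsto (fun i => ∫⁻ x in s, ENNReal.ofReal (F i x) ∂μ) l
      (𝓝 (∫⁻ x in s, ENNReal.ofReal (f x) ∂μ)) := by
  obtain ⟨C, hC⟩ := hf
  refine tendsto_lintegral_filter_of_dominated_convergence' (fun _ => ENNReal.ofReal (C + 1))
    (hF.mono fun i hi => hi.ennreal_ofReal) ?_ ?_ ?_
  · filter_upwards [Metric.tendstoUniformlyOn_iff.mp h 1 one_pos] with i hi
    refine ae_restrict_of_forall_mem hs fun x hx => ENNReal.ofReal_le_ofReal ?_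
    have hFx := (abs_lt.mp (Real.dist_eq (f x) (F i x) ▸ hi x hx)).1
    linarith [hC (mem_image_of_mem f hx)]
  · rw [setLIntegral_const]
    exact ENNReal.mul_ne_top ENNReal.ofReal_ne_top hμs
  · exact ae_restrict_of_forall_mem hs fun x hx => ENNReal.tendsto_ofReal (h.tendsto_at hx)

section MeasureConvergence

variable {ι α : Type*} [MeasurableSpace α] {μ : Measure α} {l : Filter ι} {A : Set α}
  {B : ι → Set α}

theorem tendsto_measure_diff_of_eventually_subset_cthickening [PseudoMetricSpace α]
    [OpensMeasurableSpace α] (hA : IsClosed A) (hAfin : ∃ R > 0, μ (Metric.cthickening R A) ≠ ∞)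
    (hB : ∀ r > 0, ∀ᶠ i in l, B i ⊆ Metric.cthickening r A) :
    Tendsto (fun i => μ (B i \ A)) l (𝓝 0) := by
  have hμA : μ A ≠ ∞ := by
    obtain ⟨R, -, hR⟩ := hAfin
    exact ne_top_of_le_ne_top hR (measure_mono (Metric.self_subset_cthickening A))
  have hthin : Tendsto (fun r => μ (Metric.cthickening r A \ A)) (𝓝 0) (𝓝 0) := by
    have := ENNReal.Tendsto.sub (tendsto_measure_cthickening_of_isClosed hAfin hA)
      (tendsto_const_nhds (x := μ A)) (Or.inl hμA)
    rw [tsub_self] at this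
    refine this.congr fun r => ?_
    rw [measure_sdiff (Metric.self_subset_cthickening A) hA.nullMeasurableSet hμA]
  rw [ENNReal.tendsto_nhds_zero] at hthin ⊢
  intro ε hε
  obtain ⟨r, hrε, hr⟩ :=
    ((hthin ε hε).filter_mono nhdsWithin_le_nhds |>.and (self_mem_nhdsWithin (s := Ioi 0))).exists
  filter_upwards [hB r hr] with i hi
  exact (measure_mono (sdiff_subset_sdiff_left hi)).trans hrε

theorem tendsto_measure_symmDiff_of_tendsto_measure_diff (hA : μ A ≠ ∞)
    (hB : ∀ i, NullMeasurableSet (B i) μ) (h_diff : Tendsto (fun i => μ (B i \ A)) l (𝓝 0))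
    (h_meas : Tendsto (fun i => μ (B i)) l (𝓝 (μ A))) :
    Tendsto (fun i => μ (symmDiff (B i) A)) l (𝓝 0) := by
  have h_diff' : Tendsto (fun i => μ A + μ (B i \ A) - μ (B i)) l (𝓝 0) := by
    have := ENNReal.Tendsto.sub (tendsto_const_nhds.add h_diff) h_meas (Or.inl (by simpa))
    rwa [add_zero, tsub_self] at this
  have h_le : ∀ᶠ i in l, μ (A \ B i) ≤ μ A + μ (B i \ A) - μ (B i) := by
    filter_upwards [h_meas.eventually_ne hA] with i hBi
    refine ENNReal.le_sub_of_add_le_right hBi ?_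
    calc μ (A \ B i) + μ (B i) = μ (A ∪ B i \ A) := by
          rw [← measure_union₀ (hB i) disjoint_sdiff_left.aedisjoint, sdiff_union_self,
            union_sdiff_self]
      _ ≤ μ A + μ (B i \ A) := measure_union_le _ _
  have hsum := h_diff.add (tendsto_of_tendsto_of_tendsto_of_le_of_le' tendsto_const_nhds h_diff'
    (.of_forall fun _ => zero_le) h_le)
  rw [add_zero] at hsum
  refine tendsto_of_tendsto_of_tendsto_of_le_of_le' tendsto_const_nhds hsum
    (.of_forall fun _ => zero_le) ?_
  filter_upwards [h_le] with i hi
  rw [Set.symmDiff_def]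
  exact (measure_union_le _ _).trans (by gcongr)

end MeasureConvergence
namespace DiffeoCondition

variable {S₂ : Type*} [TopologicalSpace S₂] {n : ℕ} {φ : S₂ → (Fin n → ℝ) → (Fin n → ℝ)}
  {Ω K : Set (Fin n → ℝ)}

theorem isCompact_image (hφ : DiffeoCondition φ Ω) (hK : IsCompact K) (hKΩ : K ⊆ Ω) (s : S₂) :
    IsCompact (φ s '' K) :=
  hK.image_of_continuousOn <|
    hφ.cont.comp (Continuous.prodMk_right s).continuousOn fun _ hω => ⟨mem_univ s, hKΩ hω⟩

theorem tendstoUniformlyOn (hφ : DiffeoCondition φ Ω) (hK : IsCompact K) (hKΩ : K ⊆ Ω)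
    (s : S₂) : TendstoUniformlyOn φ (φ s) (𝓝 s) K :=
  hK.tendstoUniformlyOn_of_continuousOn_prod (hφ.cont.mono (prod_mono subset_rfl hKΩ)) s

theorem volume_image (hφ : DiffeoCondition φ Ω) (hK : MeasurableSet K) (hKΩ : K ⊆ Ω) (s : S₂) :
    volume (φ s '' K) = ∫⁻ ω in K, ENNReal.ofReal |(fderiv ℝ (φ s) ω).det| :=
  (lintegral_abs_det_fderiv_eq_addHaar_image volume hK
    (fun ω hω => (hφ.diff s ω (hKΩ hω)).hasFDerivAt.hasFDerivWithinAt)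
    ((hφ.inj s).mono hKΩ)).symm

theorem tendsto_volume_image [FirstCountableTopology S₂] (hφ : DiffeoCondition φ Ω)
    (hK : IsCompact K) (hKΩ : K ⊆ Ω) (s : S₂) :
    Tendsto (fun s' => volume (φ s' '' K)) (𝓝 s) (𝓝 (volume (φ s '' K))) := by
  have hJ : ContinuousOn (fun p : S₂ × (Fin n → ℝ) => |(fderiv ℝ (φ p.1) p.2).det|)
      (univ ×ˢ K) :=
    ((continuous_abs.comp ContinuousLinearMap.continuous_det).comp_continuousOn
      hφ.jacCont).mono (prod_mono subset_rfl hKΩ)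
  have hJs : ContinuousOn (fun ω => |(fderiv ℝ (φ s) ω).det|) K :=
    hJ.comp (Continuous.prodMk_right s).continuousOn fun _ hω => ⟨mem_univ s, hω⟩
  have hJmeas (s' : S₂) : Measurable fun ω => |(fderiv ℝ (φ s') ω).det| :=
    (ContinuousLinearMap.continuous_det.measurable.comp (measurable_fderiv ℝ (φ s'))).abs
  simp only [hφ.volume_image hK.measurableSet hKΩ]
  exact (hK.tendstoUniformlyOn_of_continuousOn_prod
    (F := fun s' ω => |(fderiv ℝ (φ s') ω).det|) hJ s).tendsto_setLIntegral_ofReal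
    hK.measurableSet hK.measure_lt_top.ne (.of_forall fun s' => (hJmeas s').aemeasurable)
    (hK.bddAbove_image hJs)

end DiffeoCondition

theorem images_converge_hausdorff_and_frechetNikodym_general
    {S₂ : Type*} [MetricSpace S₂] {n : ℕ}
    (Ω : Set (Fin n → ℝ))
    (φ : S₂ → (Fin n → ℝ) → (Fin n → ℝ)) (hφ : DiffeoCondition φ Ω)
    (K : Set (Fin n → ℝ)) (hKcomp : IsCompact K) (hKΩ : K ⊆ Ω) :
    ∀ s₂ : S₂,
      Filter.Tendsto (fun s₂' => Metric.hausdorffDist (φ s₂' '' K) (φ s₂ '' K))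
        (𝓝 s₂) (𝓝 0) ∧
      Filter.Tendsto (fun s₂' => volume (symmDiff (φ s₂' '' K) (φ s₂ '' K)))
        (𝓝 s₂) (𝓝 0) := by
  intro s
  have hunif := hφ.tendstoUniformlyOn hKcomp hKΩ s
  have hA := hφ.isCompact_image hKcomp hKΩ s
  refine ⟨hunif.tendsto_hausdorffDist_image, ?_⟩
  refine tendsto_measure_symmDiff_of_tendsto_measure_diff hA.measure_lt_top.ne
    (fun s' => (hφ.isCompact_image hKcomp hKΩ s').isClosed.measurableSet.nullMeasurableSet) ?_
    (hφ.tendsto_volume_image hKcomp hKΩ s)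
  exact tendsto_measure_diff_of_eventually_subset_cthickening hA.isClosed
    ⟨1, one_pos, hA.cthickening.measure_lt_top.ne⟩
    fun r hr => hunif.eventually_image_subset_cthickening hr

/-- Images `φ(s₂',K)` of a compact set `K ⊂ Ω` under a function satisfying the Diffeomorphic
Condition converge, as `s₂' → s₂`, to `φ(s₂,K)` both in the Hausdorff metric and in the
Fréchet–Nikodym sense (Lebesgue measure of the symmetric difference tends to zero). -/
theorem images_converge_hausdorff_and_frechetNikodym
    {S₂ : Type*} [MetricSpace S₂] {n : ℕ}
    (Ω : Set (Fin n → ℝ)) (hΩopen : IsOpen Ω) (hΩne : Ω.Nonempty)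
    (φ : S₂ → (Fin n → ℝ) → (Fin n → ℝ)) (hφ : DiffeoCondition φ Ω)
    (K : Set (Fin n → ℝ)) (hKne : K.Nonempty) (hKcomp : IsCompact K) (hKΩ : K ⊆ Ω) :
    ∀ s₂ : S₂,
      Filter.Tendsto (fun s₂' => Metric.hausdorffDist (φ s₂' '' K) (φ s₂ '' K))
        (𝓝 s₂) (𝓝 0) ∧
      Filter.Tendsto (fun s₂' => volume (symmDiff (φ s₂' '' K) (φ s₂ '' K)))
        (𝓝 s₂) (𝓝 0) :=
  images_converge_hausdorff_and_frechetNikodym_general Ω φ hφ K hKcomp hKΩ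

end
end

section
/- Let S₂ be a metric space, let Ω ⊂ ℝⁿ be a nonempty open set, let φ : S₂ × ℝⁿ → ℝⁿ satisfy the Diffeomorphic Condition with respect to Ω, and let K ⊂ Ω be a nonempty compact set. Consider the set Γ = {(s₂, φ(s₂,ω)) : s₂ ∈ S₂, ω ∈ K} ⊂ S₂ × ℝⁿ. Then the map ψ : Γ → ℝⁿ that assigns to each (s₂, y) ∈ Γ the unique ω ∈ Ω with φ(s₂,ω) = y (which exists and lies in K by injectivity of φ(s₂,·) on Ω) is continuous on Γ. -/
open MeasureTheory Filter Topology Set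

noncomputable section

/-- On the graph `Γ = {(s₂, φ(s₂,ω)) : s₂ ∈ S₂, ω ∈ K}` (with `K ⊂ Ω` compact), the map
assigning to `(s₂,y)` the unique `ω ∈ Ω` with `φ(s₂,ω) = y` is continuous: any function
`ψ : Γ → ℝⁿ` with `ψ(s₂,y) ∈ Ω` and `φ(s₂, ψ(s₂,y)) = y` is continuous. -/
theorem inverse_continuous_on_graph
    {S₂ : Type*} [MetricSpace S₂] {n : ℕ}
    (Ω : Set (Fin n → ℝ)) (hΩopen : IsOpen Ω) (hΩne : Ω.Nonempty)
    (φ : S₂ → (Fin n → ℝ) → (Fin n → ℝ)) (hφ : DiffeoCondition φ Ω)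
    (K : Set (Fin n → ℝ)) (hKne : K.Nonempty) (hKcomp : IsCompact K) (hKΩ : K ⊆ Ω)
    (ψ : {q : S₂ × (Fin n → ℝ) // ∃ ω ∈ K, φ q.1 ω = q.2} → (Fin n → ℝ))
    (hψ : ∀ q : {q : S₂ × (Fin n → ℝ) // ∃ ω ∈ K, φ q.1 ω = q.2},
      ψ q ∈ Ω ∧ φ q.val.1 (ψ q) = q.val.2) :
    Continuous ψ := by
  have hψK : ∀ q, ψ q ∈ K := by
    intro q
    obtain ⟨ω, hωK, hωeq⟩ := q.2
    have := hφ.inj q.1.1 (hψ q).1 (hKΩ hωK) ((hψ q).2.trans hωeq.symm)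
    rw [this]; exact hωK
  rw [continuous_iff_seqContinuous]
  intro u q hu
  apply tendsto_of_subseq_tendsto
  intro ns hns
  obtain ⟨winf, hwinfK, ms, hms, hmstend⟩ :=
    hKcomp.tendsto_subseq (x := fun k => ψ (u (ns k))) (fun k => hψK _)
  refine ⟨ms, ?_⟩
  -- it suffices to show winf = ψ q
  suffices h : winf = ψ q by rwa [h] at hmstend
  -- the pairs ((u (ns (ms k))).1.1, ψ (u (ns (ms k)))) tend to (q.1.1, winf) within univ ×ˢ Ω
  have htendp : Tendsto (fun k => ((u (ns (ms k))).1.1, ψ (u (ns (ms k)))))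
      atTop (𝓝 (q.1.1, winf)) := by
    refine Tendsto.prodMk_nhds ?_ hmstend
    have : Tendsto (fun k => u (ns (ms k))) atTop (𝓝 q) :=
      (hu.comp hns).comp hms.tendsto_atTop
    exact (continuous_fst.comp continuous_subtype_val).continuousAt.tendsto.comp this
  have hmem : ∀ k, ((u (ns (ms k))).1.1, ψ (u (ns (ms k)))) ∈ Set.univ ×ˢ Ω :=
    fun k => ⟨trivial, (hψ _).1⟩
  have hφtend : Tendsto (fun k => φ (u (ns (ms k))).1.1 (ψ (u (ns (ms k)))))
      atTop (𝓝 (φ q.1.1 winf)) := by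
    have hcw : ContinuousWithinAt (fun p : S₂ × (Fin n → ℝ) => φ p.1 p.2)
        (Set.univ ×ˢ Ω) (q.1.1, winf) := hφ.cont _ ⟨trivial, hKΩ hwinfK⟩
    exact hcw.tendsto.comp
      (tendsto_nhdsWithin_of_tendsto_nhds_of_eventually_within _ htendp
        (Eventually.of_forall hmem))
  -- but φ applied equals the second coordinate, which tends to q.2 = φ q.1.1 (ψ q)
  have hφtend' : Tendsto (fun k => φ (u (ns (ms k))).1.1 (ψ (u (ns (ms k)))))
      atTop (𝓝 q.1.2) := by
    have : Tendsto (fun k => u (ns (ms k))) atTop (𝓝 q) :=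
      (hu.comp hns).comp hms.tendsto_atTop
    have h2 : Tendsto (fun k => (u (ns (ms k))).1.2) atTop (𝓝 q.1.2) :=
      (continuous_snd.comp continuous_subtype_val).continuousAt.tendsto.comp this
    simpa only [fun k => (hψ (u (ns (ms k)))).2] using h2
  have heq : φ q.1.1 winf = φ q.1.1 (ψ q) := by
    have := tendsto_nhds_unique hφtend hφtend'
    rw [this, (hψ q).2]
  exact hφ.inj q.1.1 (hKΩ hwinfK) (hψ q).1 heq
end
end

section
/- Let X, Y, and A be Borel spaces that are separable metric spaces, let T be a stochastic kernel on X given X × A, and let Q₁ be a stochastic kernel on Y given X × A. Define the product stochastic kernel P on X × Y given X × A by P(B × C | x,a) = T(B|x,a) · Q₁(C|x,a) for Borel B ⊂ X and C ⊂ Y. Then P is semi-uniform Feller if and only if T is weakly continuous and Q₁ is continuous in total variation. -/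
open MeasureTheory ProbabilityTheory Filter Topology BoundedContinuousFunction Set

noncomputable section

/-- The section measure of a product measure. -/
lemma sectionMeasure_prod {X Y : Type*} [MeasurableSpace X] [MeasurableSpace Y]
    (μ : Measure X) (ν : Measure Y) [SigmaFinite μ] [SigmaFinite ν] (B : Set Y) :
    sectionMeasure (μ.prod ν) B = ν B • μ := by
  have h1 : (μ.prod ν).restrict (Set.univ ×ˢ B) = μ.prod (ν.restrict B) := by
    rw [← Measure.prod_restrict, Measure.restrict_univ]
  rw [sectionMeasure, h1, Measure.map_fst_prod, Measure.restrict_apply_univ]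

lemma iSup_meas_congr {Y : Type*} [MeasurableSpace Y] {a b : Set Y → ℝ}
    (h : ∀ B, MeasurableSet B → a B = b B) :
    (⨆ (B : Set Y) (_ : MeasurableSet B), a B)
      = ⨆ (B : Set Y) (_ : MeasurableSet B), b B := by
  refine iSup_congr fun B => ?_
  by_cases hB : MeasurableSet B
  · haveI : Nonempty (MeasurableSet B) := ⟨hB⟩
    rw [ciSup_const, ciSup_const, h B hB]
  · haveI : IsEmpty (MeasurableSet B) := ⟨hB⟩
    rw [Real.iSup_of_isEmpty, Real.iSup_of_isEmpty]

lemma iSup_meas_le {Y : Type*} [MeasurableSpace Y] {a : Set Y → ℝ} {c : ℝ} (hc : 0 ≤ c)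
    (h : ∀ B, MeasurableSet B → a B ≤ c) :
    (⨆ (B : Set Y) (_ : MeasurableSet B), a B) ≤ c :=
  Real.iSup_le (fun B => Real.iSup_le (fun hB => h B hB) hc) hc

lemma iSup_meas_nonneg {Y : Type*} [MeasurableSpace Y] {a : Set Y → ℝ}
    (h : ∀ B, MeasurableSet B → 0 ≤ a B) :
    0 ≤ ⨆ (B : Set Y) (_ : MeasurableSet B), a B :=
  Real.iSup_nonneg fun B => Real.iSup_nonneg fun hB => h B hB

lemma le_iSup_meas {Y : Type*} [MeasurableSpace Y] {a : Set Y → ℝ} {c : ℝ} (hc : 0 ≤ c)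
    (h : ∀ B, MeasurableSet B → a B ≤ c) {B : Set Y} (hB : MeasurableSet B) :
    a B ≤ ⨆ (B : Set Y) (_ : MeasurableSet B), a B := by
  haveI : Nonempty (MeasurableSet B) := ⟨hB⟩
  calc a B = ⨆ _ : MeasurableSet B, a B := ciSup_const.symm
    _ ≤ ⨆ (B : Set Y) (_ : MeasurableSet B), a B := by
        refine le_ciSup (f := fun B : Set Y => ⨆ _ : MeasurableSet B, a B) ⟨c, ?_⟩ B
        rintro _ ⟨B', rfl⟩
        exact Real.iSup_le (fun hB' => h B' hB') hc

lemma abs_integral_le_norm {X : Type*} [MeasurableSpace X] [TopologicalSpace X]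
    (μ : Measure X) [IsProbabilityMeasure μ] (f : X →ᵇ ℝ) :
    |∫ x, f x ∂μ| ≤ ‖f‖ := by
  calc |∫ x, f x ∂μ| ≤ ‖f‖ * (μ Set.univ).toReal :=
        norm_integral_le_of_norm_le_const
          (Filter.Eventually.of_forall fun x => f.norm_coe_le_norm x)
    _ = ‖f‖ := by simp

/-- For the product kernel `P(B × C|x,a) = T(B|x,a) · Q₁(C|x,a)` (a POMDP1 model), `P` is
semi-uniform Feller if and only if `T` is weakly continuous and `Q₁` is continuous in total
variation. -/
theorem product_kernel_semiUniformFeller_iff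
    {X Y A : Type*}
    [MeasurableSpace X] [MetricSpace X] [BorelSpace X]
    [TopologicalSpace.SeparableSpace X] [StandardBorelSpace X]
    [MeasurableSpace Y] [MetricSpace Y] [BorelSpace Y]
    [TopologicalSpace.SeparableSpace Y] [StandardBorelSpace Y]
    [MeasurableSpace A] [MetricSpace A] [BorelSpace A]
    [TopologicalSpace.SeparableSpace A] [StandardBorelSpace A]
    (T : Kernel (X × A) X) [IsMarkovKernel T]
    (Q₁ : Kernel (X × A) Y) [IsMarkovKernel Q₁]
    (P : Kernel (X × A) (X × Y)) [IsMarkovKernel P]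
    (hP : ∀ (x : X) (a : A) (B : Set X) (C : Set Y), MeasurableSet B → MeasurableSet C →
      P (x, a) (B ×ˢ C) = T (x, a) B * Q₁ (x, a) C) :
    SemiUniformFeller P ↔
      ((∀ f : X →ᵇ ℝ, Continuous fun p : X × A => ∫ x', f x' ∂(T p)) ∧
        (∀ p : X × A, Filter.Tendsto
          (fun p' => ⨆ (C : Set Y) (_ : MeasurableSet C),
            |(Q₁ p' C).toReal - (Q₁ p C).toReal|)
          (𝓝 p) (𝓝 0))) := by
  have hPeq : ∀ p : X × A, P p = (T p).prod (Q₁ p) := fun p =>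
    (Measure.prod_eq fun s t hs ht => hP p.1 p.2 s t hs ht).symm
  have key : ∀ (p : X × A) (f : X →ᵇ ℝ) (B : Set Y),
      ∫ x, f x ∂(sectionMeasure (P p) B) = (Q₁ p B).toReal * ∫ x, f x ∂(T p) := by
    intro p f B
    rw [hPeq p, sectionMeasure_prod, integral_smul_measure, smul_eq_mul]
  have hq1 : ∀ (p : X × A) (B : Set Y), |(Q₁ p B).toReal| ≤ 1 := by
    intro p B
    rw [abs_of_nonneg ENNReal.toReal_nonneg]
    have := ENNReal.toReal_mono ENNReal.one_ne_top (prob_le_one (μ := Q₁ p) (s := B))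
    simpa using this
  constructor
  · intro h
    constructor
    · -- weak continuity of T
      intro f
      rw [continuous_iff_continuousAt]
      intro p
      have hS := h p f
      have hbd : ∀ (p' : X × A) (B : Set Y), MeasurableSet B →
          |(∫ x, f x ∂(sectionMeasure (P p') B)) - ∫ x, f x ∂(sectionMeasure (P p) B)|
            ≤ 2 * ‖f‖ := by
        intro p' B _
        rw [key, key]
        have h1 : ∀ p₀ : X × A, |(Q₁ p₀ B).toReal * ∫ x, f x ∂(T p₀)| ≤ ‖f‖ := by
          intro p₀
          rw [abs_mul]
          calc |(Q₁ p₀ B).toReal| * |∫ x, f x ∂(T p₀)| ≤ 1 * ‖f‖ :=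
                mul_le_mul (hq1 p₀ B) (abs_integral_le_norm _ f) (abs_nonneg _) one_pos.le
            _ = ‖f‖ := one_mul _
        calc |(Q₁ p' B).toReal * (∫ x, f x ∂(T p')) - (Q₁ p B).toReal * ∫ x, f x ∂(T p)|
            ≤ |(Q₁ p' B).toReal * ∫ x, f x ∂(T p')| + |(Q₁ p B).toReal * ∫ x, f x ∂(T p)| :=
              abs_sub _ _
          _ ≤ 2 * ‖f‖ := by have := h1 p'; have := h1 p; linarith
      have hfnn : (0:ℝ) ≤ 2 * ‖f‖ := by positivity
      unfold ContinuousAt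
      rw [tendsto_iff_dist_tendsto_zero]
      refine squeeze_zero (fun _ => dist_nonneg) (fun p' => ?_) hS
      have huniv : ∀ p' : X × A,
          (∫ x, f x ∂(sectionMeasure (P p') (Set.univ : Set Y))) = ∫ x, f x ∂(T p') := by
        intro p'; rw [key]; simp
      simp only [Real.dist_eq]
      rw [← huniv p', ← huniv p]
      exact le_iSup_meas hfnn (hbd p') MeasurableSet.univ
    · -- total variation continuity of Q₁
      intro p
      have hS := h p (BoundedContinuousFunction.const X (1:ℝ))
      have heq : ∀ p' : X × A,
          (⨆ (C : Set Y) (_ : MeasurableSet C), |(Q₁ p' C).toReal - (Q₁ p C).toReal|)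
            = ⨆ (B : Set Y) (_ : MeasurableSet B),
              |(∫ x, (BoundedContinuousFunction.const X (1:ℝ)) x
                  ∂(sectionMeasure (P p') B))
                - ∫ x, (BoundedContinuousFunction.const X (1:ℝ)) x
                  ∂(sectionMeasure (P p) B)| := by
        intro p'
        refine iSup_meas_congr fun B hB => ?_
        rw [key, key]
        simp
      simp only [heq]
      exact hS
  · rintro ⟨h1, h2⟩ p f
    have hIc : Tendsto (fun p' => |(∫ x, f x ∂(T p')) - ∫ x, f x ∂(T p)|) (𝓝 p) (𝓝 0) := by
      have h := ((h1 f).tendsto p).sub_const (∫ x, f x ∂(T p))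
      simpa using h.abs
    set TV : (X × A) → ℝ := fun p' =>
      ⨆ (C : Set Y) (_ : MeasurableSet C), |(Q₁ p' C).toReal - (Q₁ p C).toReal| with hTV
    have hTVnn : ∀ p', 0 ≤ TV p' := fun p' =>
      Real.iSup_nonneg fun C => Real.iSup_nonneg fun _ => abs_nonneg _
    have hqTV : ∀ (p' : X × A) (B : Set Y), MeasurableSet B →
        |(Q₁ p' B).toReal - (Q₁ p B).toReal| ≤ TV p' := by
      intro p' B hB
      simp only [hTV]
      refine le_iSup_meas (a := fun C : Set Y => |(Q₁ p' C).toReal - (Q₁ p C).toReal|) (c := 2) (by norm_num) (fun C _ => ?_) hB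
      calc |(Q₁ p' C).toReal - (Q₁ p C).toReal|
          ≤ |(Q₁ p' C).toReal| + |(Q₁ p C).toReal| := abs_sub _ _
        _ ≤ 2 := by have := hq1 p' C; have := hq1 p C; linarith
    have hbound : ∀ p' : X × A,
        (⨆ (B : Set Y) (_ : MeasurableSet B),
          |(∫ x, f x ∂(sectionMeasure (P p') B)) - ∫ x, f x ∂(sectionMeasure (P p) B)|)
          ≤ |(∫ x, f x ∂(T p')) - ∫ x, f x ∂(T p)| + ‖f‖ * TV p' := by
      intro p'
      have hrhsnn : 0 ≤ |(∫ x, f x ∂(T p')) - ∫ x, f x ∂(T p)| + ‖f‖ * TV p' :=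
        add_nonneg (abs_nonneg _) (mul_nonneg (norm_nonneg f) (hTVnn p'))
      refine iSup_meas_le hrhsnn fun B hB => ?_
      rw [key, key]
      have hsplit : (Q₁ p' B).toReal * (∫ x, f x ∂(T p')) - (Q₁ p B).toReal * ∫ x, f x ∂(T p)
          = (Q₁ p' B).toReal * ((∫ x, f x ∂(T p')) - ∫ x, f x ∂(T p))
            + ((Q₁ p' B).toReal - (Q₁ p B).toReal) * ∫ x, f x ∂(T p) := by ring
      calc |(Q₁ p' B).toReal * (∫ x, f x ∂(T p')) - (Q₁ p B).toReal * ∫ x, f x ∂(T p)|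
          ≤ |(Q₁ p' B).toReal * ((∫ x, f x ∂(T p')) - ∫ x, f x ∂(T p))|
            + |((Q₁ p' B).toReal - (Q₁ p B).toReal) * ∫ x, f x ∂(T p)| := by
            rw [hsplit]; exact abs_add_le _ _
        _ ≤ 1 * |(∫ x, f x ∂(T p')) - ∫ x, f x ∂(T p)| + TV p' * ‖f‖ := by
            rw [abs_mul, abs_mul]
            exact add_le_add
              (mul_le_mul (hq1 p' B) le_rfl (abs_nonneg _) one_pos.le)
              (mul_le_mul (hqTV p' B hB) (abs_integral_le_norm _ f) (abs_nonneg _) (hTVnn p'))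
        _ = |(∫ x, f x ∂(T p')) - ∫ x, f x ∂(T p)| + ‖f‖ * TV p' := by ring
    refine squeeze_zero (fun p' => iSup_meas_nonneg fun B _ => abs_nonneg _) hbound ?_
    have hlim : Tendsto (fun p' => |(∫ x, f x ∂(T p')) - ∫ x, f x ∂(T p)| + ‖f‖ * TV p')
        (𝓝 p) (𝓝 (0 + ‖f‖ * 0)) := hIc.add ((h2 p).const_mul ‖f‖)
    simpa using hlim

end
end

section
/- (Multiplicative noise) Let A be a metric space, let f : ℝ^d × A → ℝ^d be continuous with f_j(x,a) ≠ 0 for all (x,a) ∈ ℝ^d × A and all coordinates j = 1,…,d, and let μ be a Borel probability measure on ℝ^d that is absolutely continuous with respect to Lebesgue measure on ℝ^d. Then the stochastic kernel T on ℝ^d given ℝ^d × A defined by T(B|x,a) = μ({ξ ∈ ℝ^d : (ξ₁ f₁(x,a), …, ξ_d f_d(x,a)) ∈ B}) for Borel B ⊂ ℝ^d is continuous in total variation: for every (x,a) ∈ ℝ^d × A, sup_{B ∈ B(ℝ^d)} |T(B|x',a') − T(B|x,a)| → 0 as (x',a') → (x,a). -/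
/-! The kernel `T(·|x,a)` is the image of `μ` under the linear map `D = diag f(x,a)`.
Let `g` be the Lebesgue density of `μ` and `M = D(x,a)⁻¹ D(x',a')`. With `S = D(x,a)⁻¹ B`,
`T(B|x',a') - T(B|x,a) = μ(M⁻¹ S) - μ(S)`, and the linear change of variables bounds this,
uniformly in `S`, by `∫ ‖|det M| g(M ξ) - g ξ‖ dξ`. This tends to `0` as `M → 1`: by dominated
convergence when `g` is continuous with compact support, and in general by approximating `g`
in `L¹`. -/

open MeasureTheory Filter Topology Set

section

variable {E : Type*} [NormedAddCommGroup E] [NormedSpace ℝ E]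

theorem ContinuousLinearMap.norm_le_two_mul_norm_apply {L : E →L[ℝ] E} (hL : ‖L - 1‖ ≤ 1 / 2)
    (x : E) : ‖x‖ ≤ 2 * ‖L x‖ := by
  have h : ‖(L - 1) x‖ ≤ ‖x‖ / 2 := by
    calc ‖(L - 1) x‖ ≤ ‖L - 1‖ * ‖x‖ := (L - 1).le_opNorm x
      _ ≤ 1 / 2 * ‖x‖ := by gcongr
      _ = ‖x‖ / 2 := by ring
  have : ‖x‖ ≤ ‖L x‖ + ‖(L - 1) x‖ := by
    simpa using norm_sub_le (L x) ((L - 1) x)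
  linarith

theorem ContinuousLinearMap.eventually_det_ne_zero :
    ∀ᶠ L in 𝓝 (1 : E →L[ℝ] E), L.det ≠ 0 :=
  ContinuousLinearMap.continuous_det.continuousAt.eventually_ne (by simp [ContinuousLinearMap.det])

variable [FiniteDimensional ℝ E] [MeasurableSpace E] [BorelSpace E]

theorem ContinuousLinearMap.measurableEmbedding_of_det_ne_zero {L : E →L[ℝ] E} (hL : L.det ≠ 0) :
    MeasurableEmbedding L :=
  ((L : E →ₗ[ℝ] E).equivOfDetNeZero hL).toContinuousLinearEquiv.toHomeomorph.measurableEmbedding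

variable (μ : Measure E) [μ.IsAddHaarMeasure] {F : Type*} [NormedAddCommGroup F]

theorem map_continuousLinearMap_addHaar_eq_smul_addHaar {L : E →L[ℝ] E} (hL : L.det ≠ 0) :
    μ.map L = ENNReal.ofReal |L.det|⁻¹ • μ := by
  rw [← abs_inv]
  exact Measure.map_linearMap_addHaar_eq_smul_addHaar μ hL

theorem integrable_comp_continuousLinearMap_iff {L : E →L[ℝ] E} (hL : L.det ≠ 0) {g : E → F} :
    Integrable (fun x => g (L x)) μ ↔ Integrable g μ := by
  rw [← Function.comp_def, ← (L.measurableEmbedding_of_det_ne_zero hL).integrable_map_iff,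
    map_continuousLinearMap_addHaar_eq_smul_addHaar μ hL]
  exact integrable_smul_measure (by simpa using hL) ENNReal.ofReal_ne_top

variable [NormedSpace ℝ F]

theorem integral_comp_continuousLinearMap {L : E →L[ℝ] E} (hL : L.det ≠ 0) (g : E → F) :
    ∫ x, g (L x) ∂μ = |L.det|⁻¹ • ∫ x, g x ∂μ := by
  rw [← (L.measurableEmbedding_of_det_ne_zero hL).integral_map,
    map_continuousLinearMap_addHaar_eq_smul_addHaar μ hL, integral_smul_measure,
    ENNReal.toReal_ofReal (by positivity)]

theorem setIntegral_comp_continuousLinearMap {L : E →L[ℝ] E} (hL : L.det ≠ 0) (g : E → F)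
    (S : Set E) : ∫ x in L ⁻¹' S, g (L x) ∂μ = |L.det|⁻¹ • ∫ x in S, g x ∂μ := by
  rw [← (L.measurableEmbedding_of_det_ne_zero hL).setIntegral_map,
    map_continuousLinearMap_addHaar_eq_smul_addHaar μ hL, Measure.restrict_smul,
    integral_smul_measure, ENNReal.toReal_ofReal (by positivity)]

theorem HasCompactSupport.tendsto_integral_norm_abs_det_smul_comp_sub {φ : E → F}
    (hφ : Continuous φ) (hsupp : HasCompactSupport φ) :
    Tendsto (fun L : E →L[ℝ] E => ∫ x, ‖|L.det| • φ (L x) - φ x‖ ∂μ) (𝓝 1) (𝓝 0) := by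
  obtain ⟨M, hM⟩ := hsupp.exists_bound_of_continuous hφ
  have hM0 : 0 ≤ M := le_trans (norm_nonneg _) (hM 0)
  obtain ⟨R, hR⟩ := hsupp.isBounded.subset_closedBall 0
  have hφ_zero {x : E} (hx : R < ‖x‖) : φ x = 0 := by
    refine image_eq_zero_of_notMem_tsupport fun h => ?_
    simpa [hx.not_ge] using hR h
  have hdet : Tendsto (fun L : E →L[ℝ] E => |L.det|) (𝓝 1) (𝓝 1) := by
    simpa [ContinuousLinearMap.det] using
      (ContinuousLinearMap.continuous_det.abs.tendsto (1 : E →L[ℝ] E))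
  have hbound : ∀ᶠ L in 𝓝 (1 : E →L[ℝ] E), ∀ x, ‖|L.det| • φ (L x) - φ x‖ ≤
      (Metric.closedBall (0 : E) (2 * R)).indicator (fun _ => 3 * M) x := by
    filter_upwards [Metric.closedBall_mem_nhds (1 : E →L[ℝ] E) one_half_pos,
      hdet.eventually_le_const one_lt_two] with L hL hLdet x
    rw [mem_closedBall_iff_norm] at hL
    by_cases hx : ‖x‖ ≤ 2 * R
    · rw [indicator_of_mem (by simpa using hx)]
      calc ‖|L.det| • φ (L x) - φ x‖ ≤ |L.det| * ‖φ (L x)‖ + ‖φ x‖ := by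
            simpa [norm_smul] using norm_sub_le (|L.det| • φ (L x)) (φ x)
        _ ≤ 2 * M + M := by gcongr; exacts [hM _, hM _]
        _ = 3 * M := by ring
    · rw [indicator_of_notMem (by simpa using hx), hφ_zero (x := L x), hφ_zero, smul_zero,
        sub_zero, norm_zero]
      · linarith [norm_nonneg x]
      · linarith [L.norm_le_two_mul_norm_apply hL x]
  have hlim : ∀ x, Tendsto (fun L : E →L[ℝ] E => ‖|L.det| • φ (L x) - φ x‖) (𝓝 1) (𝓝 0) := by
    intro x
    have hφL : Tendsto (fun L : E →L[ℝ] E => φ (L x)) (𝓝 1) (𝓝 (φ x)) :=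
      (hφ.comp (ContinuousLinearMap.apply ℝ E x).continuous).tendsto' 1 (φ x) (by simp)
    simpa using ((hdet.smul hφL).sub_const (φ x)).norm
  simpa using tendsto_integral_filter_of_dominated_convergence _
    (Eventually.of_forall fun L => by fun_prop)
    (hbound.mono fun L hL => Eventually.of_forall fun x => by simpa using hL x)
    ((integrableOn_const measure_closedBall_lt_top.ne).integrable_indicator
      measurableSet_closedBall)
    (Eventually.of_forall hlim)

theorem Integrable.tendsto_integral_norm_abs_det_smul_comp_sub {g : E → F} (hg : Integrable g μ) :
    Tendsto (fun L : E →L[ℝ] E => ∫ x, ‖|L.det| • g (L x) - g x‖ ∂μ) (𝓝 1) (𝓝 0) := by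
  rw [Metric.tendsto_nhds]
  intro ε hε
  obtain ⟨φ, hφsupp, hgφ, hφ, hφint⟩ := hg.exists_hasCompactSupport_integral_sub_le (ε := ε / 3)
    (by positivity)
  filter_upwards [ContinuousLinearMap.eventually_det_ne_zero,
    (hφsupp.tendsto_integral_norm_abs_det_smul_comp_sub μ hφ).eventually_lt_const
      (by positivity : 0 < ε / 3)]
    with L hL hφL
  have hgL : Integrable (fun x => g (L x)) μ :=
    (integrable_comp_continuousLinearMap_iff μ hL).2 hg
  have hφL' : Integrable (fun x => φ (L x)) μ :=
    (integrable_comp_continuousLinearMap_iff μ hL).2 hφint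
  have hrescale : ∫ x, ‖|L.det| • (g (L x) - φ (L x))‖ ∂μ = ∫ x, ‖g x - φ x‖ ∂μ := by
    simp_rw [norm_smul, Real.norm_eq_abs, abs_abs]
    rw [integral_const_mul, integral_comp_continuousLinearMap μ hL (fun x => ‖g x - φ x‖),
      smul_eq_mul, ← mul_assoc, mul_inv_cancel₀ (abs_ne_zero.2 hL), one_mul]
  have hφg : ∫ x, ‖φ x - g x‖ ∂μ ≤ ε / 3 := by simpa only [norm_sub_rev] using hgφ
  have htriangle : ∫ x, ‖|L.det| • g (L x) - g x‖ ∂μ ≤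
      ∫ x, ‖|L.det| • (g (L x) - φ (L x))‖ ∂μ + ∫ x, ‖|L.det| • φ (L x) - φ x‖ ∂μ +
        ∫ x, ‖φ x - g x‖ ∂μ := by
    have i₁ : Integrable (fun x => ‖|L.det| • (g (L x) - φ (L x))‖) μ :=
      ((hgL.sub hφL').smul |L.det|).norm
    have i₂ : Integrable (fun x => ‖|L.det| • φ (L x) - φ x‖) μ :=
      ((hφL'.smul |L.det|).sub hφint).norm
    have i₃ : Integrable (fun x => ‖φ x - g x‖) μ := (hφint.sub hg).norm
    rw [← integral_add i₁ i₂, ← integral_add (i₁.fun_add i₂) i₃]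
    refine integral_mono ((hgL.smul |L.det|).sub hg).norm ((i₁.fun_add i₂).fun_add i₃) fun x => ?_
    calc ‖|L.det| • g (L x) - g x‖
        = ‖|L.det| • (g (L x) - φ (L x)) + (|L.det| • φ (L x) - φ x) + (φ x - g x)‖ := by
          rw [smul_sub]; abel_nf
      _ ≤ _ := norm_add₃_le
  rw [Real.dist_eq, sub_zero, abs_of_nonneg (integral_nonneg fun x => norm_nonneg _)]
  linarith

theorem abs_measureReal_preimage_sub_le_integral_rnDeriv {ν : Measure E} [IsFiniteMeasure ν]
    (hν : ν ≪ μ) {L : E →L[ℝ] E} (hL : L.det ≠ 0) (S : Set E) :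
    |ν.real (L ⁻¹' S) - ν.real S| ≤
      ∫ x, ‖|L.det| • (ν.rnDeriv μ (L x)).toReal - (ν.rnDeriv μ x).toReal‖ ∂μ := by
  set g : E → ℝ := fun x => (ν.rnDeriv μ x).toReal
  have hg : Integrable g μ := Measure.integrable_toReal_rnDeriv
  have hgL : Integrable (fun x => |L.det| • g (L x)) μ :=
    ((integrable_comp_continuousLinearMap_iff μ hL).2 hg).smul |L.det|
  have hLS : ν.real (L ⁻¹' S) = ∫ x in L ⁻¹' S, g x ∂μ :=
    (Measure.setIntegral_toReal_rnDeriv hν _).symm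
  have hS : ν.real S = ∫ x in L ⁻¹' S, |L.det| • g (L x) ∂μ := by
    rw [integral_smul, setIntegral_comp_continuousLinearMap μ hL,
      smul_inv_smul₀ (abs_ne_zero.2 hL), Measure.setIntegral_toReal_rnDeriv hν]
  calc |ν.real (L ⁻¹' S) - ν.real S|
      = ‖∫ x in L ⁻¹' S, (|L.det| • g (L x) - g x) ∂μ‖ := by
        rw [hLS, hS, integral_sub hgL.integrableOn hg.integrableOn, Real.norm_eq_abs,
          abs_sub_comm]
    _ ≤ ∫ x in L ⁻¹' S, ‖|L.det| • g (L x) - g x‖ ∂μ := norm_integral_le_integral_norm _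
    _ ≤ ∫ x, ‖|L.det| • g (L x) - g x‖ ∂μ :=
        setIntegral_le_integral (hgL.sub hg).norm (Eventually.of_forall fun x => norm_nonneg _)

end

/-- **Multiplicative noise.** If `f : ℝ^d × A → ℝ^d` is continuous with all coordinates nonzero
and `μ` is a probability measure on `ℝ^d` absolutely continuous with respect to Lebesgue
measure, then the stochastic kernel `T(B|x,a) = μ({ξ : diag(ξ) f(x,a) ∈ B})` is continuous in
total variation. -/
theorem multiplicative_noise_tv_continuous
    {A : Type*} [MetricSpace A] {d : ℕ}
    (f : (Fin d → ℝ) → A → (Fin d → ℝ))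
    (hf : Continuous fun p : (Fin d → ℝ) × A => f p.1 p.2)
    (hfne : ∀ (x : Fin d → ℝ) (a : A) (j : Fin d), f x a j ≠ 0)
    (μ : Measure (Fin d → ℝ)) [IsProbabilityMeasure μ] (hμ : μ ≪ volume)
    (T : (Fin d → ℝ) × A → Measure (Fin d → ℝ))
    (hT : ∀ (x : Fin d → ℝ) (a : A) (B : Set (Fin d → ℝ)), MeasurableSet B →
      T (x, a) B = μ {ξ | (fun j => ξ j * f x a j) ∈ B}) :
    ∀ p : (Fin d → ℝ) × A,
      Filter.Tendsto
        (fun p' => ⨆ (B : Set (Fin d → ℝ)) (_ : MeasurableSet B),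
          |(T p' B).toReal - (T p B).toReal|)
        (𝓝 p) (𝓝 0) := by
  rintro ⟨x, a⟩
  set M : (Fin d → ℝ) × A → (Fin d → ℝ) →L[ℝ] (Fin d → ℝ) := fun q =>
    ContinuousLinearMap.mul ℝ (Fin d → ℝ) (f q.1 q.2 * (f x a)⁻¹)
  have hM : Tendsto M (𝓝 (x, a)) (𝓝 1) := by
    have hM1 : M (x, a) = 1 := by ext ξ j; simp [M, hfne x a j]
    rw [← hM1]
    exact ((ContinuousLinearMap.mul ℝ _).continuous.comp (hf.mul continuous_const)).tendsto _
  have hTM : ∀ y b B, MeasurableSet B →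
      T (y, b) B = μ (M (y, b) ⁻¹' {ξ | (fun j => ξ j * f x a j) ∈ B}) := by
    intro y b B hB
    have hscale : ∀ ξ, (fun j => M (y, b) ξ j * f x a j) = fun j => ξ j * f y b j := by
      intro ξ
      funext j
      simp only [M, ContinuousLinearMap.mul_apply', Pi.mul_apply, Pi.inv_apply]
      field_simp [hfne x a j]
    simp only [hT y b B hB, preimage_ofPred_eq, hscale]
  have hbound : ∀ᶠ q in 𝓝 (x, a), ⨆ (B : Set (Fin d → ℝ)) (_ : MeasurableSet B),
      |(T q B).toReal - (T (x, a) B).toReal| ≤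
        ∫ ξ, ‖|(M q).det| • (μ.rnDeriv volume (M q ξ)).toReal - (μ.rnDeriv volume ξ).toReal‖ := by
    filter_upwards [hM.eventually ContinuousLinearMap.eventually_det_ne_zero] with ⟨y, b⟩ hdet
    have hK : 0 ≤ ∫ ξ, ‖|(M (y, b)).det| • (μ.rnDeriv volume (M (y, b) ξ)).toReal -
        (μ.rnDeriv volume ξ).toReal‖ := integral_nonneg fun _ => norm_nonneg _
    refine Real.iSup_le (fun B => Real.iSup_le (fun hB => ?_) hK) hK
    rw [hTM y b B hB, hT x a B hB]
    exact abs_measureReal_preimage_sub_le_integral_rnDeriv volume hμ hdet _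
  exact squeeze_zero'
    (Eventually.of_forall fun q => Real.iSup_nonneg fun B => Real.iSup_nonneg fun _ => abs_nonneg _)
    hbound
    ((Integrable.tendsto_integral_norm_abs_det_smul_comp_sub volume
      Measure.integrable_toReal_rnDeriv).comp hM)
end

section
/- Let X ∈ ℝ^{k×d} be a matrix and let A ∈ ℝ^{k×ℓ} be a matrix that is nonsingular, i.e., the linear map a ↦ Aa is injective. Then the function c : ℝ^d × ℝ^ℓ → ℝ defined by c(x,a) = ‖Xx − Aa‖, where ‖·‖ is the Euclidean norm on ℝ^k, is nonnegative and K-inf-compact on ℝ^d × ℝ^ℓ. -/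
open Matrix Set

/-- A function `f : S₁ × S₂ → ℝ` is `K`-inf-compact if for every nonempty compact `C ⊆ S₁`
and every `γ ∈ ℝ` the sublevel set `{(s₁,s₂) ∈ C × S₂ : f(s₁,s₂) ≤ γ}` is compact. -/
def KInfCompact {S₁ S₂ : Type*} [TopologicalSpace S₁] [TopologicalSpace S₂]
    (f : S₁ → S₂ → ℝ) : Prop :=
  ∀ C : Set S₁, C.Nonempty → IsCompact C → ∀ γ : ℝ,
    IsCompact {p : S₁ × S₂ | p.1 ∈ C ∧ f p.1 p.2 ≤ γ}

/-- For a matrix `X ∈ ℝ^{k×d}` and a nonsingular matrix `A ∈ ℝ^{k×ℓ}` (meaning `a ↦ Aa` is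
injective), the state-estimation cost `c(x,a) = ‖Xx − Aa‖` (Euclidean norm on `ℝ^k`) is
nonnegative and `K`-inf-compact. -/
theorem estimation_cost_nonneg_and_KInfCompact
    {k d ℓ : ℕ} (X : Matrix (Fin k) (Fin d) ℝ) (A : Matrix (Fin k) (Fin ℓ) ℝ)
    (hA : Function.Injective A.mulVec) :
    (∀ (x : Fin d → ℝ) (a : Fin ℓ → ℝ),
        0 ≤ ‖(EuclideanSpace.equiv (Fin k) ℝ).symm (X.mulVec x - A.mulVec a)‖) ∧
      KInfCompact (fun (x : Fin d → ℝ) (a : Fin ℓ → ℝ) =>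
        ‖(EuclideanSpace.equiv (Fin k) ℝ).symm (X.mulVec x - A.mulVec a)‖) := by
  constructor
  · intro x a; exact norm_nonneg _
  intro C hCne hC γ
  set E := EuclideanSpace.equiv (Fin k) ℝ with hE
  -- the linear map (x, a) ↦ (x, A a) is a closed embedding
  set φ : (Fin d → ℝ) × (Fin ℓ → ℝ) →ₗ[ℝ] (Fin d → ℝ) × (Fin k → ℝ) :=
    LinearMap.prodMap LinearMap.id A.mulVecLin with hφ
  have hφinj : Function.Injective φ := by
    intro p q h
    have h1 := congrArg Prod.fst h
    have h2 := congrArg Prod.snd h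
    simp only [hφ, LinearMap.prodMap_apply, LinearMap.id_apply, Matrix.mulVecLin_apply] at h1 h2
    exact Prod.ext h1 (hA h2)
  have hφemb : Topology.IsClosedEmbedding φ := φ.isClosedEmbedding_of_injective (LinearMap.ker_eq_bot.mpr hφinj)
  -- the target set
  set T : Set ((Fin d → ℝ) × (Fin k → ℝ)) :=
    {q | q.1 ∈ C ∧ ‖E.symm (X.mulVec q.1 - q.2)‖ ≤ γ} with hT
  have hset : {p : (Fin d → ℝ) × (Fin ℓ → ℝ) | p.1 ∈ C ∧
      ‖E.symm (X.mulVec p.1 - A.mulVec p.2)‖ ≤ γ} = φ ⁻¹' T := by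
    ext p
    simp [hT, hφ, Matrix.mulVecLin_apply]
  rw [hset]
  apply hφemb.isCompact_preimage
  -- T is compact: closed and contained in a compact set
  have hXcont : Continuous fun x : Fin d → ℝ => X.mulVec x :=
    X.mulVecLin.continuous_of_finiteDimensional
  have hcont : Continuous fun q : (Fin d → ℝ) × (Fin k → ℝ) =>
      ‖E.symm (X.mulVec q.1 - q.2)‖ :=
    (E.symm.continuous.comp ((hXcont.comp continuous_fst).sub continuous_snd)).norm
  have hTclosed : IsClosed T :=
    (hC.isClosed.preimage continuous_fst).inter (isClosed_le hcont continuous_const)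
  -- bound the norm of q.2 for q ∈ T
  obtain ⟨M, hM⟩ := hC.exists_bound_of_continuousOn hXcont.continuousOn
  have hbd : T ⊆ C ×ˢ Metric.closedBall 0 (M + ‖(E : EuclideanSpace ℝ (Fin k) →L[ℝ] (Fin k → ℝ))‖ * γ) := by
    rintro ⟨x, y⟩ ⟨hx, hy⟩
    refine ⟨hx, ?_⟩
    simp only [Metric.mem_closedBall, dist_zero_right]
    have h1 : ‖X.mulVec x - y‖ ≤ ‖(E : EuclideanSpace ℝ (Fin k) →L[ℝ] (Fin k → ℝ))‖ * ‖E.symm (X.mulVec x - y)‖ := by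
      have := (E : EuclideanSpace ℝ (Fin k) →L[ℝ] (Fin k → ℝ)).le_opNorm (E.symm (X.mulVec x - y))
      simpa using this
    have h2 : ‖(E : EuclideanSpace ℝ (Fin k) →L[ℝ] (Fin k → ℝ))‖ * ‖E.symm (X.mulVec x - y)‖ ≤
        ‖(E : EuclideanSpace ℝ (Fin k) →L[ℝ] (Fin k → ℝ))‖ * γ :=
      mul_le_mul_of_nonneg_left hy (norm_nonneg _)
    calc ‖y‖ = ‖X.mulVec x - (X.mulVec x - y)‖ := by ring_nf
      _ ≤ ‖X.mulVec x‖ + ‖X.mulVec x - y‖ := norm_sub_le _ _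
      _ ≤ M + ‖(E : EuclideanSpace ℝ (Fin k) →L[ℝ] (Fin k → ℝ))‖ * γ :=
          add_le_add (hM x hx) (h1.trans h2)
  exact (hC.prod (isCompact_closedBall 0 _)).of_isClosed_subset hTclosed hbd
end
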